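/- arXiv:math/0207204 — 5 statements merged into one kernel-verified Lean document; each statement's English description precedes it below -/
import Mathlib

section
/- For every natural number n ≥ 0, with T_8 = {12, 1̄2̄, 21̄}, one has b_n(T_8) = 2^{n+1} − (n+1). -/
/-- A signed permutation of length `n`: a permutation of `Fin n` (the absolute
values) together with a sign (bar) for each position. -/
abbrev SignedPerm (n : ℕ) := Equiv.Perm (Fin n) × (Fin n → Bool)

/-- `α` contains the signed pattern `τ`. -/
def SPContains {n k : ℕ} (α : SignedPerm n) (τ : SignedPerm k) : Prop :=
  ∃ f : Fin k → Fin n, StrictMono f ∧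
    (∀ p q : Fin k, τ.1 p < τ.1 q ↔ α.1 (f p) < α.1 (f q)) ∧
    ∀ j : Fin k, α.2 (f j) = τ.2 j

/-- `α` avoids every pattern in `T`. -/
def AvoidsAll {n k : ℕ} (T : Set (SignedPerm k)) (α : SignedPerm n) : Prop :=
  ∀ τ ∈ T, ¬ SPContains α τ

/-- `bn n T` is the number of signed permutations in `B_n` avoiding all patterns of `T`. -/
noncomputable def bn (n : ℕ) (T : Set (SignedPerm 2)) : ℕ :=
  Nat.card {α : SignedPerm n // AvoidsAll T α}

def p12   : SignedPerm 2 := (Equiv.refl (Fin 2), ![false, false])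
def p21   : SignedPerm 2 := (Equiv.swap 0 1,     ![false, false])
def p12b  : SignedPerm 2 := (Equiv.refl (Fin 2), ![false, true])
def p1b2  : SignedPerm 2 := (Equiv.refl (Fin 2), ![true, false])
def p21b  : SignedPerm 2 := (Equiv.swap 0 1,     ![false, true])
def p2b1  : SignedPerm 2 := (Equiv.swap 0 1,     ![true, false])
def p1b2b : SignedPerm 2 := (Equiv.refl (Fin 2), ![true, true])
def p2b1b : SignedPerm 2 := (Equiv.swap 0 1,     ![true, true])

/-!
Avoiding `12` and `1̄2̄` says that the unbarred entries and the barred entries each decrease, and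
avoiding `21̄` that every unbarred entry is smaller than every later barred one. Such a signed
permutation is determined by its set `P` of barred positions and its set `S` of barred values, and
the last condition holds iff `P` is an initial segment or `S` is a final segment of `[n]`: once an
unbarred position precedes a barred one, the largest unbarred value (at the first unbarred position)
lies below the smallest barred value (at the last barred position). Inclusion–exclusion over the
pairs `(P, S)` with `|P| = |S|` gives `2ⁿ + 2ⁿ - (n + 1)`.
-/

open Finset

theorem Finset.card_compl_eq_card_compl {γ : Type*} [Fintype γ] [DecidableEq γ] {s t : Finset γ}
    (h : #s = #t) : #sᶜ = #tᶜ := by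
  simp [card_compl, h]

section Order

variable {α β : Type*} [LinearOrder α]

theorem StrictAntiOn.eqOn_of_image_eq [Preorder β] {s : Set α} [WellFoundedGT s] {f g : α → β}
    (hf : StrictAntiOn f s) (hg : StrictAntiOn g s) (h : f '' s = g '' s) : s.EqOn f g := by
  have hF : StrictAnti (s.domRestrict f) := fun a b hab => hf a.2 b.2 hab
  have hG : StrictAnti (s.domRestrict g) := fun a b hab => hg a.2 b.2 hab
  have := (hF.range_inj hG).mp (by rwa [Set.range_domRestrict, Set.range_domRestrict])
  exact fun a ha => congrFun this ⟨a, ha⟩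

def Finset.revEquivOfCardEq {s t : Finset α} (h : #s = #t) : s ≃ t :=
  (s.orderIsoOfFin rfl).symm.toEquiv.trans (Fin.revPerm.trans (t.orderIsoOfFin h.symm).toEquiv)

theorem Finset.strictAnti_revEquivOfCardEq {s t : Finset α} (h : #s = #t) :
    StrictAnti fun a => (revEquivOfCardEq h a : α) := by
  intro a b hab
  simpa [revEquivOfCardEq] using hab

theorem IsLowerSet.finset_eq_of_card_eq {s t : Finset α} (hs : IsLowerSet (s : Set α))
    (ht : IsLowerSet (t : Set α)) (h : #s = #t) : s = t := by
  rcases hs.total ht with hst | hts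
  · exact eq_of_subset_of_card_le (coe_subset.mp hst) h.ge
  · exact (eq_of_subset_of_card_le (coe_subset.mp hts) h.le).symm

theorem IsUpperSet.finset_eq_of_card_eq {s t : Finset α} (hs : IsUpperSet (s : Set α))
    (ht : IsUpperSet (t : Set α)) (h : #s = #t) : s = t := by
  rcases hs.total ht with hst | hts
  · exact eq_of_subset_of_card_le (coe_subset.mp hst) h.ge
  · exact (eq_of_subset_of_card_le (coe_subset.mp hts) h.le).symm

end Order

section Segments

variable {n : ℕ}

def lowerSegment (n k : ℕ) : Finset (Fin n) := {i | (i : ℕ) < k}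

def upperSegment (n k : ℕ) : Finset (Fin n) := (lowerSegment n (n - k))ᶜ

theorem card_le_fin {P : Finset (Fin n)} : #P ≤ n :=
  (card_le_univ P).trans_eq (Fintype.card_fin n)

theorem card_lowerSegment {k : ℕ} (hk : k ≤ n) : #(lowerSegment n k) = k := by
  simp [lowerSegment, Fin.card_filter_val_lt, hk]

theorem card_upperSegment {k : ℕ} (hk : k ≤ n) : #(upperSegment n k) = k := by
  rw [upperSegment, card_compl, Fintype.card_fin, card_lowerSegment (Nat.sub_le n k)]
  omega

theorem isLowerSet_lowerSegment (k : ℕ) : IsLowerSet (lowerSegment n k : Set (Fin n)) :=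
  fun a b hba ha => by
    simp only [lowerSegment, coe_filter, mem_univ, true_and, Set.mem_ofPred_eq] at ha ⊢
    exact lt_of_le_of_lt hba ha

theorem isUpperSet_upperSegment (k : ℕ) : IsUpperSet (upperSegment n k : Set (Fin n)) := by
  rw [upperSegment, coe_compl, isUpperSet_compl]
  exact isLowerSet_lowerSegment _

theorem IsLowerSet.eq_lowerSegment {P : Finset (Fin n)} (hP : IsLowerSet (P : Set (Fin n))) :
    P = lowerSegment n #P :=
  hP.finset_eq_of_card_eq (isLowerSet_lowerSegment _) (card_lowerSegment card_le_fin).symm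

theorem IsUpperSet.eq_upperSegment {S : Finset (Fin n)} (hS : IsUpperSet (S : Set (Fin n))) :
    S = upperSegment n #S :=
  hS.finset_eq_of_card_eq (isUpperSet_upperSegment _) (card_upperSegment card_le_fin).symm

open Classical in
theorem card_filter_isLowerSet :
    #{ps : Finset (Fin n) × Finset (Fin n) | #ps.1 = #ps.2 ∧ IsLowerSet (ps.1 : Set (Fin n))} =
      2 ^ n := by
  rw [show 2 ^ n = #(univ : Finset (Finset (Fin n))) by simp]
  refine card_nbij' Prod.snd (fun S => (lowerSegment n #S, S)) (fun _ _ => mem_coe.2 (mem_univ _))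
    (fun S _ => ?_) (fun ps hps => ?_) (fun _ _ => rfl)
  · simp [card_lowerSegment card_le_fin, isLowerSet_lowerSegment]
  · simp only [mem_coe, mem_filter, mem_univ, true_and] at hps
    exact Prod.ext (hps.1 ▸ hps.2.eq_lowerSegment).symm rfl

open Classical in
theorem card_filter_isUpperSet :
    #{ps : Finset (Fin n) × Finset (Fin n) | #ps.1 = #ps.2 ∧ IsUpperSet (ps.2 : Set (Fin n))} =
      2 ^ n := by
  rw [show 2 ^ n = #(univ : Finset (Finset (Fin n))) by simp]
  refine card_nbij' Prod.fst (fun P => (P, upperSegment n #P)) (fun _ _ => mem_coe.2 (mem_univ _))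
    (fun P _ => ?_) (fun ps hps => ?_) (fun _ _ => rfl)
  · simp [card_upperSegment card_le_fin, isUpperSet_upperSegment]
  · simp only [mem_coe, mem_filter, mem_univ, true_and] at hps
    exact Prod.ext rfl (hps.1 ▸ hps.2.eq_upperSegment).symm

open Classical in
theorem card_filter_isLowerSet_and_isUpperSet :
    #{ps : Finset (Fin n) × Finset (Fin n) |
      (#ps.1 = #ps.2 ∧ IsLowerSet (ps.1 : Set (Fin n))) ∧
        (#ps.1 = #ps.2 ∧ IsUpperSet (ps.2 : Set (Fin n)))} = n + 1 := by
  rw [← card_range (n + 1)]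
  refine card_nbij' (fun ps => #ps.1) (fun k => (lowerSegment n k, upperSegment n k))
    (fun _ _ => mem_coe.2 (mem_range_succ_iff.2 card_le_fin)) (fun k hk => ?_) (fun ps hps => ?_)
    (fun k hk => card_lowerSegment (mem_range_succ_iff.1 hk))
  · have hk : k ≤ n := mem_range_succ_iff.1 hk
    simp [card_lowerSegment hk, card_upperSegment hk, isLowerSet_lowerSegment,
      isUpperSet_upperSegment]
  · simp only [mem_coe, mem_filter, mem_univ, true_and] at hps
    obtain ⟨⟨hcard, hP⟩, -, hS⟩ := hps
    exact Prod.ext hP.eq_lowerSegment.symm (hcard ▸ hS.eq_upperSegment).symm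

open Classical in
theorem card_filter_isLowerSet_or_isUpperSet :
    #{ps : Finset (Fin n) × Finset (Fin n) | #ps.1 = #ps.2 ∧
      (IsLowerSet (ps.1 : Set (Fin n)) ∨ IsUpperSet (ps.2 : Set (Fin n)))} =
      2 ^ (n + 1) - (n + 1) := by
  have h := card_union_add_card_inter
    {ps : Finset (Fin n) × Finset (Fin n) | #ps.1 = #ps.2 ∧ IsLowerSet (ps.1 : Set (Fin n))}
    {ps | #ps.1 = #ps.2 ∧ IsUpperSet (ps.2 : Set (Fin n))}
  rw [← filter_or, ← filter_and, card_filter_isLowerSet, card_filter_isUpperSet,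
    card_filter_isLowerSet_and_isUpperSet] at h
  simp_rw [and_or_left]
  rw [pow_succ]
  omega

end Segments

theorem spContains_two_iff {n : ℕ} (α : SignedPerm n) (τ : SignedPerm 2) :
    SPContains α τ ↔ ∃ i j, i < j ∧ α.2 i = τ.2 0 ∧ α.2 j = τ.2 1 ∧
      (τ.1 0 < τ.1 1 ↔ α.1 i < α.1 j) := by
  constructor
  · rintro ⟨f, hf, hord, hsign⟩
    exact ⟨f 0, f 1, hf Fin.zero_lt_one, hsign 0, hsign 1, hord 0 1⟩
  · rintro ⟨i, j, hij, hi, hj, hord⟩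
    have hτ : τ.1 0 ≠ τ.1 1 := τ.1.injective.ne Fin.zero_ne_one
    have hα : α.1 i ≠ α.1 j := α.1.injective.ne hij.ne
    refine ⟨![i, j], ?_, ?_, ?_⟩
    · intro p q hpq
      fin_cases p <;> fin_cases q <;> simp_all
    · have hrev : τ.1 1 < τ.1 0 ↔ α.1 j < α.1 i := by
        rw [lt_iff_not_ge, hτ.le_iff_lt, hord, not_lt, hα.symm.le_iff_lt]
      intro p q
      fin_cases p <;> fin_cases q <;> simp [hord, hrev]
    · intro p
      fin_cases p <;> simp [hi, hj]

namespace SignedPerm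

variable {n : ℕ}

def IsT8Avoider (α : SignedPerm n) : Prop :=
  (∀ b, StrictAntiOn α.1 {i | α.2 i = b}) ∧
    ∀ i j, i < j → α.2 i = false → α.2 j = true → α.1 i < α.1 j

theorem avoidsAll_T8_iff (α : SignedPerm n) :
    AvoidsAll {p12, p1b2b, p21b} α ↔ IsT8Avoider α := by
  have hne : ∀ {i j}, i < j → α.1 i ≠ α.1 j := fun hij => α.1.injective.ne hij.ne
  have hanti : ∀ b, (∀ i j, i < j → α.2 i = b → α.2 j = b → α.1 j ≤ α.1 i) ↔
      StrictAntiOn α.1 {i | α.2 i = b} :=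
    fun b => ⟨fun h _ hi _ hj hij => (h _ _ hij hi hj).lt_of_ne (hne hij).symm,
      fun h _ _ hij hi hj => (h hi hj hij).le⟩
  simp only [AvoidsAll, Set.mem_insert_iff, Set.mem_singleton_iff, forall_eq_or_imp, forall_eq,
    spContains_two_iff, p12, p1b2b, p21b, Fin.isValue, Matrix.cons_val_zero, Matrix.cons_val_one,
    Equiv.refl_apply, zero_lt_one, true_iff, Equiv.swap_apply_left, Equiv.swap_apply_right,
    not_lt_zero, false_iff, not_exists, not_and, not_lt, not_le, hanti, IsT8Avoider,
    Bool.forall_bool, and_assoc]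

def barredPos (α : SignedPerm n) : Finset (Fin n) := {i | α.2 i = true}

def barredVal (α : SignedPerm n) : Finset (Fin n) := (barredPos α).map α.1.toEmbedding

theorem card_barredVal (α : SignedPerm n) : #(barredVal α) = #(barredPos α) := card_map _

theorem coe_barredVal (α : SignedPerm n) :
    (barredVal α : Set (Fin n)) = α.1 '' {i | α.2 i = true} := by
  simp [barredVal, barredPos]

theorem IsT8Avoider.unbarred_lt_barred {α : SignedPerm n} (hα : IsT8Avoider α)
    (hP : ¬IsLowerSet (barredPos α : Set (Fin n))) {p q : Fin n} (hp : α.2 p = true)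
    (hq : α.2 q = false) : α.1 q < α.1 p := by
  obtain ⟨i, j, hji, hi, hj⟩ : ∃ i j, j ≤ i ∧ α.2 i = true ∧ α.2 j = false := by
    simpa [IsLowerSet, barredPos] using hP
  have hji : j < i := hji.lt_of_ne (by rintro rfl; simp_all)
  have hj' : α.2 (min j q) = false := by rcases min_choice j q with h | h <;> rwa [h]
  have hi' : α.2 (max i p) = true := by rcases max_choice i p with h | h <;> rwa [h]
  calc α.1 q ≤ α.1 (min j q) := (hα.1 false).antitoneOn hj' hq (min_le_right j q)
    _ < α.1 (max i p) :=
      hα.2 _ _ ((min_le_left j q).trans_lt (hji.trans_le (le_max_left i p))) hj' hi'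
    _ ≤ α.1 p := (hα.1 true).antitoneOn hp hi' (le_max_right i p)

theorem IsT8Avoider.isLowerSet_or_isUpperSet {α : SignedPerm n} (hα : IsT8Avoider α) :
    IsLowerSet (barredPos α : Set (Fin n)) ∨ IsUpperSet (barredVal α : Set (Fin n)) := by
  refine or_iff_not_imp_left.mpr fun hP a b hab ha => ?_
  rw [coe_barredVal] at ha ⊢
  obtain ⟨p, hp, rfl⟩ := ha
  refine ⟨α.1.symm b, ?_, α.1.apply_symm_apply b⟩
  by_contra hq
  have := hα.unbarred_lt_barred hP hp (Bool.of_not_eq_true hq)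
  rw [α.1.apply_symm_apply] at this
  exact this.not_ge hab

theorem IsT8Avoider.ext {α β : SignedPerm n} (hα : IsT8Avoider α) (hβ : IsT8Avoider β)
    (hP : barredPos α = barredPos β) (hS : barredVal α = barredVal β) : α = β := by
  have hsign : α.2 = β.2 := funext fun i => Bool.eq_iff_iff.mpr <| by
    simpa [barredPos] using Finset.ext_iff.mp hP i
  have himage : ∀ b, α.1 '' {i | α.2 i = b} = β.1 '' {i | α.2 i = b} := by
    have htrue := congrArg (fun s : Finset (Fin n) => (s : Set (Fin n))) hS
    simp only [coe_barredVal, ← hsign] at htrue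
    have hcompl : {i | α.2 i = false} = {i | α.2 i = true}ᶜ := by ext; simp
    rintro (_ | _)
    · rw [hcompl, Equiv.image_compl, Equiv.image_compl, htrue]
    · exact htrue
  refine Prod.ext (Equiv.ext fun a => ?_) hsign
  exact (hα.1 (α.2 a)).eqOn_of_image_eq (hsign ▸ hβ.1 (α.2 a)) (himage _) rfl

def ofBarred (P S : Finset (Fin n)) (h : #P = #S) : SignedPerm n :=
  (Equiv.subtypeCongr (P.revEquivOfCardEq h)
    ((Equiv.subtypeEquivRight fun _ => mem_compl).symm.trans <|
      (Pᶜ.revEquivOfCardEq (card_compl_eq_card_compl h)).trans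
        (Equiv.subtypeEquivRight fun _ => mem_compl)),
    fun i => decide (i ∈ P))

section OfBarred

variable {P S : Finset (Fin n)} (h : #P = #S)

theorem ofBarred_apply_of_mem {a : Fin n} (ha : a ∈ P) :
    (ofBarred P S h).1 a = P.revEquivOfCardEq h ⟨a, ha⟩ := by
  simp [ofBarred, Equiv.subtypeCongr, Equiv.sumCompl_symm_apply_of_pos ha]

theorem ofBarred_apply_of_notMem {a : Fin n} (ha : a ∉ P) :
    (ofBarred P S h).1 a =
      Pᶜ.revEquivOfCardEq (card_compl_eq_card_compl h) ⟨a, mem_compl.2 ha⟩ := by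
  simp [ofBarred, Equiv.subtypeCongr, Equiv.sumCompl_symm_apply_of_neg ha]
  rfl

theorem barredPos_ofBarred : barredPos (ofBarred P S h) = P := by
  ext
  simp [barredPos, ofBarred]

theorem barredVal_ofBarred : barredVal (ofBarred P S h) = S := by
  refine eq_of_subset_of_card_le (fun x hx => ?_) (by rw [card_barredVal, barredPos_ofBarred, h])
  obtain ⟨a, ha, rfl⟩ := mem_map.mp hx
  rw [barredPos_ofBarred] at ha
  simp [ofBarred_apply_of_mem h ha]

theorem isT8Avoider_ofBarred
    (hPS : IsLowerSet (P : Set (Fin n)) ∨ IsUpperSet (S : Set (Fin n))) :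
    IsT8Avoider (ofBarred P S h) := by
  refine ⟨fun b a ha c hc hac => ?_, fun i j hij hi hj => ?_⟩
  · cases b
    · simp only [ofBarred, Set.mem_ofPred_eq, decide_eq_false_iff_not] at ha hc
      rw [ofBarred_apply_of_notMem h ha, ofBarred_apply_of_notMem h hc]
      exact strictAnti_revEquivOfCardEq _ (Subtype.mk_lt_mk.mpr hac)
    · simp only [ofBarred, Set.mem_ofPred_eq, decide_eq_true_eq] at ha hc
      rw [ofBarred_apply_of_mem h ha, ofBarred_apply_of_mem h hc]
      exact strictAnti_revEquivOfCardEq _ (Subtype.mk_lt_mk.mpr hac)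
  · simp only [ofBarred, decide_eq_false_iff_not, decide_eq_true_eq] at hi hj
    rcases hPS with hP | hS
    · exact absurd (hP hij.le hj) hi
    · rw [ofBarred_apply_of_notMem h hi, ofBarred_apply_of_mem h hj]
      refine lt_of_not_ge fun hji => ?_
      exact mem_compl.mp (revEquivOfCardEq _ _).2 (hS hji (revEquivOfCardEq h _).2)

end OfBarred

def isT8AvoiderEquiv : {α : SignedPerm n // IsT8Avoider α} ≃
    {ps : Finset (Fin n) × Finset (Fin n) // #ps.1 = #ps.2 ∧
      (IsLowerSet (ps.1 : Set (Fin n)) ∨ IsUpperSet (ps.2 : Set (Fin n)))} where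
  toFun α :=
    ⟨(barredPos α.1, barredVal α.1), (card_barredVal _).symm, α.2.isLowerSet_or_isUpperSet⟩
  invFun ps := ⟨ofBarred ps.1.1 ps.1.2 ps.2.1, isT8Avoider_ofBarred _ ps.2.2⟩
  left_inv α := Subtype.ext <| (isT8Avoider_ofBarred _ α.2.isLowerSet_or_isUpperSet).ext α.2
    (barredPos_ofBarred _) (barredVal_ofBarred _)
  right_inv ps := Subtype.ext <| Prod.ext (barredPos_ofBarred ps.2.1) (barredVal_ofBarred ps.2.1)

theorem card_isT8Avoider :
    Nat.card {α : SignedPerm n // IsT8Avoider α} = 2 ^ (n + 1) - (n + 1) := by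
  classical
  rw [Nat.card_congr isT8AvoiderEquiv, Nat.card_eq_fintype_card, Fintype.card_subtype,
    card_filter_isLowerSet_or_isUpperSet]

end SignedPerm

/-- b_n(T₈) with T₈ = {12,1̄2̄,21̄} equals 2^{n+1} − (n+1). -/
theorem stmt10 (n : ℕ) :
    bn n {p12, p1b2b, p21b} = 2 ^ (n + 1) - (n + 1) := by
  rw [bn, Nat.card_congr (Equiv.subtypeEquivRight SignedPerm.avoidsAll_T8_iff),
    SignedPerm.card_isT8Avoider]
end

section
/- For every natural number n ≥ 0, with T_9 = {12, 21̄, 2̄1}, one has b_n(T_9) = n! + Σ_{j=1}^{n} Σ_{p+q=n−j, p,q ≥ 0} p!·q!. -/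
set_option linter.unreachableTactic false
set_option linter.unusedTactic false
set_option maxHeartbeats 1000000

/-! ### Characterization of containment for length-2 patterns -/

lemma strictMono_pair {n : ℕ} {i j : Fin n} (h : i < j) : StrictMono ![i, j] := by
  intro a b hab
  fin_cases a <;> fin_cases b <;> simp_all <;> exact absurd hab (by decide)

lemma contains_p12_iff {n : ℕ} (α : SignedPerm n) :
    SPContains α p12 ↔ ∃ i j : Fin n, i < j ∧ α.1 i < α.1 j ∧ α.2 i = false ∧ α.2 j = false := by
  constructor
  · rintro ⟨f, hf, hiff, hs⟩
    refine ⟨f 0, f 1, hf (by decide), (hiff 0 1).mp (by simp [p12]), ?_, ?_⟩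
    · simpa [p12] using hs 0
    · simpa [p12] using hs 1
  · rintro ⟨i, j, hij, hlt, h0, h1⟩
    refine ⟨![i, j], strictMono_pair hij, ?_, ?_⟩
    · intro p q
      fin_cases p <;> fin_cases q <;>
        simp [p12, hlt, lt_asymm hlt]
    · intro j'
      fin_cases j' <;> simp [p12, h0, h1]

lemma contains_p21b_iff {n : ℕ} (α : SignedPerm n) :
    SPContains α p21b ↔ ∃ i j : Fin n, i < j ∧ α.1 j < α.1 i ∧ α.2 i = false ∧ α.2 j = true := by
  constructor
  · rintro ⟨f, hf, hiff, hs⟩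
    refine ⟨f 0, f 1, hf (by decide), (hiff 1 0).mp (by simp [p21b]), ?_, ?_⟩
    · simpa [p21b] using hs 0
    · simpa [p21b] using hs 1
  · rintro ⟨i, j, hij, hlt, h0, h1⟩
    refine ⟨![i, j], strictMono_pair hij, ?_, ?_⟩
    · intro p q
      fin_cases p <;> fin_cases q <;>
        simp [p21b, hlt, lt_asymm hlt] <;> decide
    · intro j'
      fin_cases j' <;> simp [p21b, h0, h1]

lemma contains_p2b1_iff {n : ℕ} (α : SignedPerm n) :
    SPContains α p2b1 ↔ ∃ i j : Fin n, i < j ∧ α.1 j < α.1 i ∧ α.2 i = true ∧ α.2 j = false := by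
  constructor
  · rintro ⟨f, hf, hiff, hs⟩
    refine ⟨f 0, f 1, hf (by decide), (hiff 1 0).mp (by simp [p2b1]), ?_, ?_⟩
    · simpa [p2b1] using hs 0
    · simpa [p2b1] using hs 1
  · rintro ⟨i, j, hij, hlt, h0, h1⟩
    refine ⟨![i, j], strictMono_pair hij, ?_, ?_⟩
    · intro p q
      fin_cases p <;> fin_cases q <;>
        simp [p2b1, hlt, lt_asymm hlt] <;> decide
    · intro j'
      fin_cases j' <;> simp [p2b1, h0, h1]

def GoodP {n : ℕ} (α : SignedPerm n) : Prop := ∀ i j : Fin n, i < j →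
  (α.2 i = false → α.2 j = false → α.1 j < α.1 i) ∧
  (α.2 i = false → α.2 j = true → α.1 i < α.1 j) ∧
  (α.2 i = true → α.2 j = false → α.1 i < α.1 j)

lemma avoids_iff {n : ℕ} (α : SignedPerm n) :
    AvoidsAll {p12, p21b, p2b1} α ↔ GoodP α := by
  have hne : ∀ i j : Fin n, i < j → α.1 i ≠ α.1 j :=
    fun i j h he => (ne_of_lt h) (α.1.injective he)
  constructor
  · intro hA i j hij
    have h1 := hA p12 (by simp)
    have h2 := hA p21b (by simp)
    have h3 := hA p2b1 (by simp)
    rw [contains_p12_iff] at h1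
    rw [contains_p21b_iff] at h2
    rw [contains_p2b1_iff] at h3
    refine ⟨?_, ?_, ?_⟩
    · intro hi hj
      rcases lt_trichotomy (α.1 i) (α.1 j) with h | h | h
      · exact absurd ⟨i, j, hij, h, hi, hj⟩ h1
      · exact absurd h (hne i j hij)
      · exact h
    · intro hi hj
      rcases lt_trichotomy (α.1 i) (α.1 j) with h | h | h
      · exact h
      · exact absurd h (hne i j hij)
      · exact absurd ⟨i, j, hij, h, hi, hj⟩ h2
    · intro hi hj
      rcases lt_trichotomy (α.1 i) (α.1 j) with h | h | h
      · exact h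
      · exact absurd h (hne i j hij)
      · exact absurd ⟨i, j, hij, h, hi, hj⟩ h3
  · intro hG τ hτ
    simp only [Set.mem_insert_iff, Set.mem_singleton_iff] at hτ
    rcases hτ with rfl | rfl | rfl
    · rw [contains_p12_iff]
      rintro ⟨i, j, hij, hlt, hi, hj⟩
      exact absurd hlt (not_lt_of_gt ((hG i j hij).1 hi hj))
    · rw [contains_p21b_iff]
      rintro ⟨i, j, hij, hlt, hi, hj⟩
      exact absurd hlt (not_lt_of_gt ((hG i j hij).2.1 hi hj))
    · rw [contains_p2b1_iff]
      rintro ⟨i, j, hij, hlt, hi, hj⟩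
      exact absurd hlt (not_lt_of_gt ((hG i j hij).2.2 hi hj))

/-! ### The block construction -/

section Blocks
variable {n p j q : ℕ}

def blkF (hn : p + j + q = n) (σ : Equiv.Perm (Fin p)) (ρ : Equiv.Perm (Fin q)) :
    Fin n → Fin n := fun i =>
  if h1 : i.val < p then ⟨(σ ⟨i.val, h1⟩).val, by have := (σ ⟨i.val, h1⟩).isLt; omega⟩
  else if h2 : i.val < p + j then ⟨p + j + p - 1 - i.val, by omega⟩
  else ⟨p + j + (ρ ⟨i.val - (p + j), by have := i.isLt; omega⟩).val,
    by have := (ρ ⟨i.val - (p + j), by have := i.isLt; omega⟩).isLt; omega⟩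

lemma blkF_leftInv (hn : p + j + q = n) (σ : Equiv.Perm (Fin p)) (ρ : Equiv.Perm (Fin q)) :
    Function.LeftInverse (blkF hn σ.symm ρ.symm) (blkF hn σ ρ) := by
  intro i
  rcases lt_or_ge i.val p with h1 | h1
  · have hlt := (σ ⟨i.val, h1⟩).isLt
    simp only [blkF, dif_pos h1, dif_pos hlt]
    apply Fin.ext
    simp
  · rcases lt_or_ge i.val (p + j) with h2 | h2
    · have hx : ¬ (p + j + p - 1 - i.val < p) := by omega
      simp only [blkF, dif_neg (by omega : ¬ i.val < p), dif_pos h2, hx, dif_neg,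
        dif_pos (by omega : p + j + p - 1 - i.val < p + j)]
      apply Fin.ext
      simp
      omega
    · have key : ¬ (p + j + (ρ ⟨i.val - (p + j), by have := i.isLt; omega⟩).val < p + j) := by
        omega
      simp only [blkF, dif_neg (by omega : ¬ i.val < p), dif_neg (by omega : ¬ i.val < p + j),
        dif_neg (by omega :
          ¬ p + j + (ρ ⟨i.val - (p + j), by have := i.isLt; omega⟩).val < p), key, dif_neg]
      apply Fin.ext
      simp
      omega

def blkE (hn : p + j + q = n) (σ : Equiv.Perm (Fin p)) (ρ : Equiv.Perm (Fin q)) :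
    Equiv.Perm (Fin n) :=
  ⟨blkF hn σ ρ, blkF hn σ.symm ρ.symm, blkF_leftInv hn σ ρ, by
    have := blkF_leftInv hn σ.symm ρ.symm
    simp only [Equiv.symm_symm] at this; exact this⟩

lemma blkE_val_lo (hn : p + j + q = n) (σ : Equiv.Perm (Fin p)) (ρ : Equiv.Perm (Fin q))
    (i : Fin n) (h : i.val < p) : (blkE hn σ ρ i).val = (σ ⟨i.val, h⟩).val := by
  simp [blkE, blkF, dif_pos h]

lemma blkE_val_mid (hn : p + j + q = n) (σ : Equiv.Perm (Fin p)) (ρ : Equiv.Perm (Fin q))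
    (i : Fin n) (h1 : ¬ i.val < p) (h2 : i.val < p + j) :
    (blkE hn σ ρ i).val = p + j + p - 1 - i.val := by
  simp [blkE, blkF, dif_neg h1, dif_pos h2]

lemma blkE_val_hi (hn : p + j + q = n) (σ : Equiv.Perm (Fin p)) (ρ : Equiv.Perm (Fin q))
    (i : Fin n) (h2 : ¬ i.val < p + j) :
    (blkE hn σ ρ i).val
      = p + j + (ρ ⟨i.val - (p + j), by have := i.isLt; omega⟩).val := by
  simp [blkE, blkF, dif_neg (by omega : ¬ i.val < p), dif_neg h2]

def mkα (hn : p + j + q = n) (σ : Equiv.Perm (Fin p)) (ρ : Equiv.Perm (Fin q)) :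
    SignedPerm n :=
  (blkE hn σ ρ, fun i => if p ≤ i.val ∧ i.val < p + j then false else true)

lemma good_mkα (hn : p + j + q = n) (σ : Equiv.Perm (Fin p)) (ρ : Equiv.Perm (Fin q)) :
    GoodP (mkα hn σ ρ) := by
  intro a b hab
  have hab' : a.val < b.val := hab
  have hsa : (mkα hn σ ρ).2 a = (if p ≤ a.val ∧ a.val < p + j then false else true) := rfl
  have hsb : (mkα hn σ ρ).2 b = (if p ≤ b.val ∧ b.val < p + j then false else true) := rfl
  refine ⟨?_, ?_, ?_⟩
  · intro ha hb
    rw [hsa] at ha; rw [hsb] at hb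
    have ha' : p ≤ a.val ∧ a.val < p + j := by by_contra h; simp [h] at ha
    have hb' : p ≤ b.val ∧ b.val < p + j := by by_contra h; simp [h] at hb
    show ((mkα hn σ ρ).1 b).val < ((mkα hn σ ρ).1 a).val
    rw [show (mkα hn σ ρ).1 = blkE hn σ ρ from rfl,
      blkE_val_mid hn σ ρ a (by omega) ha'.2, blkE_val_mid hn σ ρ b (by omega) hb'.2]
    omega
  · intro ha hb
    rw [hsa] at ha; rw [hsb] at hb
    have ha' : p ≤ a.val ∧ a.val < p + j := by by_contra h; simp [h] at ha
    have hb' : ¬ (p ≤ b.val ∧ b.val < p + j) := by by_contra h; simp [h] at hb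
    have hb'' : ¬ b.val < p + j := by omega
    show ((mkα hn σ ρ).1 a).val < ((mkα hn σ ρ).1 b).val
    rw [show (mkα hn σ ρ).1 = blkE hn σ ρ from rfl,
      blkE_val_mid hn σ ρ a (by omega) ha'.2, blkE_val_hi hn σ ρ b hb'']
    omega
  · intro ha hb
    rw [hsa] at ha; rw [hsb] at hb
    have ha' : ¬ (p ≤ a.val ∧ a.val < p + j) := by by_contra h; simp [h] at ha
    have hb' : p ≤ b.val ∧ b.val < p + j := by by_contra h; simp [h] at hb
    have ha'' : a.val < p := by omega
    show ((mkα hn σ ρ).1 a).val < ((mkα hn σ ρ).1 b).val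
    rw [show (mkα hn σ ρ).1 = blkE hn σ ρ from rfl,
      blkE_val_lo hn σ ρ a ha'', blkE_val_mid hn σ ρ b (by omega) hb'.2]
    have := (σ ⟨a.val, ha''⟩).isLt
    omega

end Blocks

/-! ### The parameter type and the bijection -/

def Par (n : ℕ) : Type :=
  Equiv.Perm (Fin n) ⊕
    (Σ j : (Finset.Icc 1 n : Finset ℕ),
      Σ pq : (Finset.HasAntidiagonal.antidiagonal (n - j.val) : Finset (ℕ × ℕ)),
        Equiv.Perm (Fin pq.val.1) × Equiv.Perm (Fin pq.val.2))

noncomputable instance (n : ℕ) : Fintype (Par n) := by unfold Par; infer_instance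

lemma par_hn {n : ℕ} (j : (Finset.Icc 1 n : Finset ℕ))
    (pq : (Finset.HasAntidiagonal.antidiagonal (n - j.val) : Finset (ℕ × ℕ))) :
    pq.val.1 + j.val + pq.val.2 = n ∧ 1 ≤ j.val := by
  have h1 := j.property
  have h2 := pq.property
  rw [Finset.mem_Icc] at h1
  rw [Finset.HasAntidiagonal.mem_antidiagonal] at h2
  omega

def toAv (n : ℕ) : Par n → SignedPerm n
  | .inl π => (π, fun _ => true)
  | .inr ⟨j, pq, σ, ρ⟩ => mkα (par_hn j pq).1 σ ρ

lemma good_constTrue {n : ℕ} (π : Equiv.Perm (Fin n)) :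
    GoodP ((π, fun _ => true) : SignedPerm n) := by
  intro i j hij
  refine ⟨?_, ?_, ?_⟩ <;> intro hi hj <;> simp_all

lemma good_toAv {n : ℕ} (x : Par n) : GoodP (toAv n x) := by
  rcases x with π | ⟨j, pq, σ, ρ⟩
  · exact good_constTrue π
  · exact good_mkα _ σ ρ

lemma toAv_injective (n : ℕ) : Function.Injective (toAv n) := by
  rintro (π | ⟨j, pq, σ, ρ⟩) (π' | ⟨j', pq', σ', ρ'⟩) h
  · simp only [toAv] at h
    rw [Prod.ext_iff] at h
    exact congrArg Sum.inl h.1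
  · exfalso
    obtain ⟨hn', hj'⟩ := par_hn j' pq'
    have hp : pq'.val.1 < n := by omega
    have := congrFun (congrArg Prod.snd h) ⟨pq'.val.1, hp⟩
    simp [toAv, mkα] at this
    omega
  · exfalso
    obtain ⟨hn, hj⟩ := par_hn j pq
    have hp : pq.val.1 < n := by omega
    have := congrFun (congrArg Prod.snd h) ⟨pq.val.1, hp⟩
    simp [toAv, mkα] at this
    omega
  · obtain ⟨hn, hj⟩ := par_hn j pq
    obtain ⟨hn', hj'⟩ := par_hn j' pq'
    have hs := congrArg Prod.snd h
    have hkey : ∀ i : Fin n, (pq.val.1 ≤ i.val ∧ i.val < pq.val.1 + j.val) ↔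
        (pq'.val.1 ≤ i.val ∧ i.val < pq'.val.1 + j'.val) := by
      intro i
      have := congrFun hs i
      simp only [toAv, mkα] at this
      constructor
      · intro hi
        by_contra hcon
        rw [if_pos hi, if_neg hcon] at this
        exact Bool.false_ne_true this
      · intro hi
        by_contra hcon
        rw [if_neg hcon, if_pos hi] at this
        exact absurd this (by simp)
    have hpp' : pq.val.1 = pq'.val.1 := by
      have h1 := (hkey ⟨pq.val.1, by omega⟩).mp (by simp <;> omega)
      have h2 := (hkey ⟨pq'.val.1, by omega⟩).mpr (by simp <;> omega)
      simp only [Fin.val_mk] at h1 h2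
      omega
    have hjj' : j.val = j'.val := by
      rcases lt_trichotomy j.val j'.val with hc | hc | hc
      · have := (hkey ⟨pq.val.1 + j.val, by omega⟩).mpr (by simp <;> omega)
        simp only [Fin.val_mk] at this; omega
      · exact hc
      · have := (hkey ⟨pq'.val.1 + j'.val, by omega⟩).mp (by simp <;> omega)
        simp only [Fin.val_mk] at this; omega
    have hqq' : pq.val.2 = pq'.val.2 := by omega
    obtain rfl : j = j' := Subtype.ext hjj'
    obtain rfl : pq = pq' := Subtype.ext (Prod.ext hpp' hqq')
    have hπ := congrArg Prod.fst h
    simp only [toAv, mkα] at hπ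
    have hσ : σ = σ' := by
      apply Equiv.ext; intro x
      have hx : (x.val : ℕ) < n := by omega
      have h0 := congrArg (fun (e : Equiv.Perm (Fin n)) => (e ⟨x.val, hx⟩).val) hπ
      have e1 := blkE_val_lo hn σ ρ ⟨x.val, hx⟩ x.isLt
      have e2 := blkE_val_lo hn σ' ρ' ⟨x.val, hx⟩ x.isLt
      have ex : (⟨(⟨x.val, hx⟩ : Fin n).val, x.isLt⟩ : Fin pq.val.1) = x := by
        apply Fin.ext; rfl
      rw [ex] at e1 e2
      apply Fin.ext
      omega
    have hρ : ρ = ρ' := by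
      apply Equiv.ext; intro x
      have hx : pq.val.1 + j.val + x.val < n := by have := x.isLt; omega
      have h0 := congrArg
        (fun (e : Equiv.Perm (Fin n)) => (e ⟨pq.val.1 + j.val + x.val, hx⟩).val) hπ
      have hnl : ¬ ((⟨pq.val.1 + j.val + x.val, hx⟩ : Fin n).val < pq.val.1 + j.val) := by
        simp
      have e1 := blkE_val_hi hn σ ρ ⟨pq.val.1 + j.val + x.val, hx⟩ hnl
      have e2 := blkE_val_hi hn σ' ρ' ⟨pq.val.1 + j.val + x.val, hx⟩ hnl
      have ex : (⟨(⟨pq.val.1 + j.val + x.val, hx⟩ : Fin n).val - (pq.val.1 + j.val),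
          by have := x.isLt; simp only [Fin.val_mk]; omega⟩ : Fin pq.val.2) = x := by
        apply Fin.ext; simp
      rw [ex] at e1 e2
      apply Fin.ext
      omega
    rw [hσ, hρ]

/-! ### Counting helpers and the structure theorem -/

section Structure
variable {n : ℕ} (π : Equiv.Perm (Fin n)) (s : Fin n → Bool)

lemma cntLt (S : Finset (Fin n)) (k : Fin n) (h : ∀ x ∈ S, π x < π k) :
    S.card ≤ (π k).val := by
  have himg : S.image π ⊆ Finset.Iio (π k) := by
    intro y hy
    rcases Finset.mem_image.mp hy with ⟨x, hx, rfl⟩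
    exact Finset.mem_Iio.mpr (h x hx)
  have := Finset.card_le_card himg
  rwa [Finset.card_image_of_injective _ π.injective, Fin.card_Iio] at this

lemma cntGt (S : Finset (Fin n)) (k : Fin n) (h : ∀ x ∈ S, π k < π x) :
    S.card ≤ n - 1 - (π k).val := by
  have himg : S.image π ⊆ Finset.Ioi (π k) := by
    intro y hy
    rcases Finset.mem_image.mp hy with ⟨x, hx, rfl⟩
    exact Finset.mem_Ioi.mpr (h x hx)
  have := Finset.card_le_card himg
  rwa [Finset.card_image_of_injective _ π.injective, Fin.card_Ioi] at this

lemma structure_thm (hG : GoodP (π, s)) (hne : ¬ ∀ i, s i = true) :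
    ∃ (a b : Fin n), a ≤ b ∧
      (∀ k, a ≤ k → k ≤ b → s k = false) ∧
      (∀ k, k < a → s k = true) ∧
      (∀ k, b < k → s k = true) ∧
      (∀ k : Fin n, k < a → (π k).val < a.val) ∧
      (∀ k : Fin n, a ≤ k → k ≤ b → (π k).val = a.val + (b.val - k.val)) ∧
      (∀ k : Fin n, b < k → b.val + 1 ≤ (π k).val) := by
  push_neg at hne
  obtain ⟨i0, hi0⟩ := hne
  have hU : (Finset.univ.filter (fun i => s i = false)).Nonempty :=
    ⟨i0, by simp [Bool.not_eq_true] at hi0 ⊢; exact hi0⟩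
  set U := Finset.univ.filter (fun i => s i = false) with hUdef
  set a := U.min' hU with hadef
  set b := U.max' hU with hbdef
  have hsa : s a = false := (Finset.mem_filter.mp (U.min'_mem hU)).2
  have hsb : s b = false := (Finset.mem_filter.mp (U.max'_mem hU)).2
  have hab : a ≤ b := U.min'_le _ (U.max'_mem hU)
  have F2lo : ∀ k, k < a → s k = true := by
    intro k hk
    by_contra h
    rw [Bool.not_eq_true] at h
    have : k ∈ U := by rw [hUdef, Finset.mem_filter]; exact ⟨Finset.mem_univ _, h⟩
    exact absurd (U.min'_le _ this) (not_le.mpr hk)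
  have F2hi : ∀ k, b < k → s k = true := by
    intro k hk
    by_contra h
    rw [Bool.not_eq_true] at h
    have : k ∈ U := by rw [hUdef, Finset.mem_filter]; exact ⟨Finset.mem_univ _, h⟩
    exact absurd (U.le_max' _ this) (not_le.mpr hk)
  have F1 : ∀ k, a ≤ k → k ≤ b → s k = false := by
    intro k h1 h2
    by_contra hc
    rw [Bool.not_eq_false] at hc
    have ha' : a < k := lt_of_le_of_ne h1 (by rintro rfl; rw [hsa] at hc; exact absurd hc (by simp))
    have hb' : k < b := lt_of_le_of_ne h2 (by rintro rfl; rw [hsb] at hc; exact absurd hc (by simp))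
    have c1 : π a < π k := (hG a k ha').2.1 hsa hc
    have c2 : π k < π b := (hG k b hb').2.2 hc hsb
    have c3 : π b < π a := (hG a b (ha'.trans hb')).1 hsa hsb
    exact absurd (c1.trans c2) (lt_asymm c3)
  have Klo : ∀ k x : Fin n, k < a → a ≤ x → π k < π x := by
    intro k x hk hx
    rcases le_or_gt x b with hxb | hbx
    · exact (hG k x (lt_of_lt_of_le hk hx)).2.2 (F2lo k hk) (F1 x hx hxb)
    · exact ((hG k a hk).2.2 (F2lo k hk) hsa).trans
        ((hG a x (lt_of_le_of_lt hab hbx)).2.1 hsa (F2hi x hbx))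
  have Khi : ∀ k x : Fin n, b < k → x ≤ b → π x < π k := by
    intro k x hk hx
    rcases le_or_gt a x with hax | hxa
    · exact (hG x k (lt_of_le_of_lt hx hk)).2.1 (F1 x hax hx) (F2hi k hk)
    · exact Klo x k hxa (hab.trans hk.le)
  have Vlo : ∀ k : Fin n, k < a → (π k).val < a.val := by
    intro k hk
    have hc := cntGt π (Finset.Ici a) k (fun x hx => Klo k x hk (Finset.mem_Ici.mp hx))
    rw [Fin.card_Ici] at hc
    have h1 := (π k).isLt
    have h2 := a.isLt
    omega
  have Vhi : ∀ k : Fin n, b < k → b.val + 1 ≤ (π k).val := by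
    intro k hk
    have hc := cntLt π (Finset.Iic b) k (fun x hx => Khi k x hk (Finset.mem_Iic.mp hx))
    rw [Fin.card_Iic] at hc
    omega
  have Vmid : ∀ k : Fin n, a ≤ k → k ≤ b → (π k).val = a.val + (b.val - k.val) := by
    intro k hka hkb
    have hsk : s k = false := F1 k hka hkb
    have hdisj1 : Disjoint (Finset.Iio a) (Finset.Ioc k b) := by
      rw [Finset.disjoint_left]
      intro x hx1 hx2
      rw [Finset.mem_Iio] at hx1
      rw [Finset.mem_Ioc] at hx2
      exact absurd (hka.trans hx2.1.le) (not_le.mpr hx1)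
    have hL := cntLt π (Finset.Iio a ∪ Finset.Ioc k b) k ?_
    · have hR := cntGt π (Finset.Ico a k ∪ Finset.Ioi b) k ?_
      · have hdisj2 : Disjoint (Finset.Ico a k) (Finset.Ioi b) := by
          rw [Finset.disjoint_left]
          intro x hx1 hx2
          rw [Finset.mem_Ico] at hx1
          rw [Finset.mem_Ioi] at hx2
          exact absurd (hx2.trans (hx1.2.trans_le hkb)) (lt_irrefl b)
        rw [Finset.card_union_of_disjoint hdisj1, Fin.card_Iio, Fin.card_Ioc] at hL
        rw [Finset.card_union_of_disjoint hdisj2, Fin.card_Ico, Fin.card_Ioi] at hR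
        have h1 := (π k).isLt
        have h2 := b.isLt
        have h3 : a.val ≤ k.val := hka
        have h4 : k.val ≤ b.val := hkb
        omega
      · intro x hx
        rcases Finset.mem_union.mp hx with hx1 | hx1
        · rw [Finset.mem_Ico] at hx1
          exact (hG x k hx1.2).1 (F1 x hx1.1 (hx1.2.le.trans hkb)) hsk
        · rw [Finset.mem_Ioi] at hx1
          exact (hG k x (hkb.trans_lt hx1)).2.1 hsk (F2hi x hx1)
    · intro x hx
      rcases Finset.mem_union.mp hx with hx1 | hx1
      · rw [Finset.mem_Iio] at hx1
        exact Klo x k hx1 hka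
      · rw [Finset.mem_Ioc] at hx1
        exact (hG k x hx1.1).1 hsk (F1 x (hka.trans hx1.1.le) hx1.2)
  exact ⟨a, b, hab, F1, F2lo, F2hi, Vlo, Vmid, Vhi⟩

end Structure

section SmallPerms
variable {n : ℕ} (π : Equiv.Perm (Fin n))

def loFun (a : Fin n) (h : ∀ k : Fin n, k < a → (π k).val < a.val) :
    Fin a.val → Fin a.val :=
  fun x => ⟨(π ⟨x.val, lt_trans x.isLt a.isLt⟩).val,
    h _ (by rw [Fin.lt_def]; exact x.isLt)⟩

lemma loFun_inj (a : Fin n) (h : ∀ k : Fin n, k < a → (π k).val < a.val) :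
    Function.Injective (loFun π a h) := by
  intro x y hxy
  have h1 : (loFun π a h x).val = (loFun π a h y).val := congrArg Fin.val hxy
  simp only [loFun] at h1
  have h3 := π.injective (Fin.ext h1)
  have h4 : x.val = y.val := by simpa using congrArg Fin.val h3
  exact Fin.ext h4

noncomputable def loPerm (a : Fin n) (h : ∀ k : Fin n, k < a → (π k).val < a.val) :
    Equiv.Perm (Fin a.val) :=
  Equiv.ofBijective _ (Finite.injective_iff_bijective.mp (loFun_inj π a h))

lemma loPerm_val (a : Fin n) (h : ∀ k : Fin n, k < a → (π k).val < a.val) (x : Fin a.val) :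
    (loPerm π a h x).val = (π ⟨x.val, lt_trans x.isLt a.isLt⟩).val := rfl

def hiFun (b : Fin n) (h : ∀ k : Fin n, b < k → b.val + 1 ≤ (π k).val) :
    Fin (n - (b.val + 1)) → Fin (n - (b.val + 1)) :=
  fun y => ⟨(π ⟨b.val + 1 + y.val, by have := y.isLt; omega⟩).val - (b.val + 1),
    by have := (π ⟨b.val + 1 + y.val, by have := y.isLt; omega⟩).isLt
       have := y.isLt
       omega⟩

lemma hiFun_inj (b : Fin n) (h : ∀ k : Fin n, b < k → b.val + 1 ≤ (π k).val) :
    Function.Injective (hiFun π b h) := by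
  intro x y hxy
  have h1 : (hiFun π b h x).val = (hiFun π b h y).val := congrArg Fin.val hxy
  simp only [hiFun] at h1
  have hx2 : b.val + 1 ≤ (π ⟨b.val + 1 + x.val, by have := x.isLt; omega⟩).val :=
    h _ (by rw [Fin.lt_def]; simp only [Fin.val_mk]; omega)
  have hy2 : b.val + 1 ≤ (π ⟨b.val + 1 + y.val, by have := y.isLt; omega⟩).val :=
    h _ (by rw [Fin.lt_def]; simp only [Fin.val_mk]; omega)
  have h2 : (π ⟨b.val + 1 + x.val, by have := x.isLt; omega⟩).val
      = (π ⟨b.val + 1 + y.val, by have := y.isLt; omega⟩).val := by omega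
  have h3 := π.injective (Fin.ext h2)
  have h4 : b.val + 1 + x.val = b.val + 1 + y.val := by simpa using congrArg Fin.val h3
  exact Fin.ext (by omega)

noncomputable def hiPerm (b : Fin n) (h : ∀ k : Fin n, b < k → b.val + 1 ≤ (π k).val) :
    Equiv.Perm (Fin (n - (b.val + 1))) :=
  Equiv.ofBijective _ (Finite.injective_iff_bijective.mp (hiFun_inj π b h))

lemma hiPerm_val (b : Fin n) (h : ∀ k : Fin n, b < k → b.val + 1 ≤ (π k).val)
    (y : Fin (n - (b.val + 1))) :
    (hiPerm π b h y).val
      = (π ⟨b.val + 1 + y.val, by have := y.isLt; omega⟩).val - (b.val + 1) := rfl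

end SmallPerms

lemma toAv_surjective (n : ℕ) (α : SignedPerm n) (hG : GoodP α) :
    ∃ x : Par n, toAv n x = α := by
  obtain ⟨π, s⟩ := α
  by_cases hall : ∀ i, s i = true
  · refine ⟨Sum.inl π, ?_⟩
    simp only [toAv]
    exact Prod.ext rfl (funext fun i => (hall i).symm)
  · obtain ⟨a, b, hab, F1, F2lo, F2hi, Vlo, Vmid, Vhi⟩ := structure_thm π s hG hall
    have habv : a.val ≤ b.val := hab
    have hbn := b.isLt
    have han := a.isLt
    set σ : Equiv.Perm (Fin a.val) := loPerm π a Vlo with hσdef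
    set ρ : Equiv.Perm (Fin (n - (b.val + 1))) := hiPerm π b Vhi with hρdef
    have hn : a.val + (b.val + 1 - a.val) + (n - (b.val + 1)) = n := by omega
    refine ⟨Sum.inr ⟨⟨b.val + 1 - a.val, by rw [Finset.mem_Icc]; omega⟩,
      ⟨(a.val, n - (b.val + 1)), by rw [Finset.HasAntidiagonal.mem_antidiagonal]; show a.val + (n - (b.val + 1)) = n - (b.val + 1 - a.val); omega⟩, σ, ρ⟩, ?_⟩
    show mkα hn σ ρ = (π, s)
    refine Prod.ext ?_ ?_
    · show (blkE hn σ ρ : Equiv.Perm (Fin n)) = π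
      apply Equiv.ext
      intro i
      apply Fin.ext
      rcases lt_or_ge i.val a.val with h1 | h1
      · rw [blkE_val_lo hn σ ρ i h1]
        rfl
      · rcases lt_or_ge i.val (a.val + (b.val + 1 - a.val)) with h2 | h2
        · rw [blkE_val_mid hn σ ρ i (by omega) h2]
          have hai : a ≤ i := by rw [Fin.le_def]; omega
          have hib : i ≤ b := by rw [Fin.le_def]; omega
          rw [Vmid i hai hib]
          omega
        · rw [blkE_val_hi hn σ ρ i (by omega)]
          have hyin : i.val - (a.val + (b.val + 1 - a.val)) < n - (b.val + 1) := by
            have := i.isLt; omega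
          have hidx : b.val + 1 + (i.val - (a.val + (b.val + 1 - a.val))) < n := by
            have := i.isLt; omega
          have h5 : (ρ (⟨i.val - (a.val + (b.val + 1 - a.val)), hyin⟩ :
              Fin (n - (b.val + 1)))).val
              = (π ⟨b.val + 1 + (i.val - (a.val + (b.val + 1 - a.val))),
                  hidx⟩).val - (b.val + 1) := by
            rw [hρdef, hiPerm_val]
          have h6 : (⟨b.val + 1 + (i.val - (a.val + (b.val + 1 - a.val))),
              hidx⟩ : Fin n) = i := by
            apply Fin.ext
            simp only [Fin.val_mk]
            omega
          rw [h6] at h5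
          rw [h5]
          have h7 := Vhi i (by rw [Fin.lt_def]; omega)
          omega
    · show (fun i : Fin n =>
          if a.val ≤ i.val ∧ i.val < a.val + (b.val + 1 - a.val) then false else true) = s
      funext i
      by_cases h : a.val ≤ i.val ∧ i.val < a.val + (b.val + 1 - a.val)
      · rw [if_pos h]
        exact (F1 i (by rw [Fin.le_def]; omega) (by rw [Fin.le_def]; omega)).symm
      · rw [if_neg h]
        rcases lt_or_ge i.val a.val with h1 | h1
        · exact (F2lo i (by rw [Fin.lt_def]; omega)).symm
        · exact (F2hi i (by rw [Fin.lt_def]; omega)).symm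

/-- b_n(T₉) with T₉ = {12,21̄,2̄1} equals n! + Σ_{j=1}^n Σ_{p+q=n-j} p!·q!. -/
theorem stmt11 (n : ℕ) :
    bn n {p12, p21b, p2b1} =
      Nat.factorial n +
        ∑ j ∈ Finset.Icc 1 n,
          ∑ pq ∈ Finset.HasAntidiagonal.antidiagonal (n - j),
            Nat.factorial pq.1 * Nat.factorial pq.2 := by
  have hbij : Function.Bijective
      (fun x : Par n => (⟨toAv n x, (avoids_iff _).mpr (good_toAv x)⟩ :
        {α : SignedPerm n // AvoidsAll {p12, p21b, p2b1} α})) := by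
    constructor
    · intro x y hxy
      exact toAv_injective n (congrArg Subtype.val hxy)
    · rintro ⟨α, hα⟩
      obtain ⟨x, hx⟩ := toAv_surjective n α ((avoids_iff _).mp hα)
      exact ⟨x, Subtype.ext hx⟩
  rw [bn, ← Nat.card_eq_of_bijective _ hbij, Nat.card_eq_fintype_card]
  have : Fintype.card (Par n) =
      Nat.factorial n +
        ∑ j ∈ Finset.Icc 1 n,
          ∑ pq ∈ Finset.HasAntidiagonal.antidiagonal (n - j),
            Nat.factorial pq.1 * Nat.factorial pq.2 := by
    unfold Par
    rw [Fintype.card_sum]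
    congr 1
    · simp [Fintype.card_perm]
    · rw [Fintype.card_sigma, ← Finset.sum_coe_sort (Finset.Icc 1 n)]
      refine Finset.sum_congr rfl fun j _ => ?_
      rw [Fintype.card_sigma, ← Finset.sum_coe_sort (Finset.HasAntidiagonal.antidiagonal (n - j))]
      refine Finset.sum_congr rfl fun pq _ => ?_
      simp [Fintype.card_perm, Fintype.card_prod]
  exact this
end

section
/- For every natural number n ≥ 1, the number of 123-avoiding permutations in S_n that do not split equals C_{n−1}, the (n−1)-st Catalan number. -/
/-- `π` avoids the pattern 123. -/
def Avoids123 {n : ℕ} (π : Equiv.Perm (Fin n)) : Prop :=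
  ¬ ∃ i j k : Fin n, i < j ∧ j < k ∧ π i < π j ∧ π j < π k

/-- `π` splits: it is the concatenation of two nonempty contiguous blocks with
every entry of the first block greater than every entry of the second. -/
def Splits {n : ℕ} (π : Equiv.Perm (Fin n)) : Prop :=
  ∃ m : ℕ, 0 < m ∧ m < n ∧
    ∀ i j : Fin n, (i : ℕ) < m → m ≤ (j : ℕ) → π j < π i

open List

attribute [local instance] Classical.propDecidable

/-- list avoids pattern 123 -/
def Avo (l : List ℕ) : Prop := ∀ a b c : ℕ, [a,b,c] <+ l → a < b → b < c → False

/-- list splits at position s -/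
def SplAt (l : List ℕ) (s : ℕ) : Prop :=
  0 < s ∧ s < l.length ∧ ∀ x ∈ l.take s, ∀ y ∈ l.drop s, y < x

def Spl (l : List ℕ) : Prop := ∃ s, SplAt l s

def runlen : List ℕ → ℕ
  | [] => 0
  | [_] => 1
  | a :: b :: t => if b < a then runlen (b :: t) + 1 else 1

lemma runlen_nil : runlen [] = 0 := rfl
lemma runlen_single (a : ℕ) : runlen [a] = 1 := rfl
lemma runlen_cons_cons (a b : ℕ) (t : List ℕ) :
    runlen (a :: b :: t) = if b < a then runlen (b :: t) + 1 else 1 := rfl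

lemma runlen_le_length : ∀ l : List ℕ, runlen l ≤ l.length
  | [] => le_refl _
  | [_] => le_refl _
  | a :: b :: t => by
      rw [runlen_cons_cons]
      split
      · exact Nat.succ_le_succ (runlen_le_length (b :: t))
      · simp
lemma one_le_runlen : ∀ (l : List ℕ), l ≠ [] → 1 ≤ runlen l
  | [], h => absurd rfl h
  | [_], _ => le_refl _
  | a :: b :: t, _ => by
      rw [runlen_cons_cons]; split <;> omega

lemma chain'_take_of_le_runlen : ∀ (l : List ℕ) (j : ℕ), j ≤ runlen l →
    List.IsChain (· > ·) (l.take j)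
  | [], j, h => by
      simp [runlen_nil] at h; simp [h]
  | [a], j, h => by
      have hj : j ≤ 1 := by simpa [runlen_single] using h
      interval_cases j <;> simp
  | a :: b :: t, j, h => by
      rcases j with _|_|j
      · simp
      · simp
      · rw [runlen_cons_cons] at h
        by_cases hba : b < a
        · simp only [hba, if_pos] at h
          have h1 : j + 1 ≤ runlen (b :: t) := by omega
          have := chain'_take_of_le_runlen (b :: t) (j+1) h1
          simp only [List.take_succ_cons] at this ⊢
          rw [List.isChain_cons]
          refine ⟨?_, this⟩
          intro y hy
          simp only [List.take_succ_cons, List.head?_cons, Option.mem_def,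
            Option.some.injEq] at hy
          omega
        · simp [hba] at h

lemma le_runlen_of_chain' : ∀ (l : List ℕ) (j : ℕ), j ≤ l.length →
    List.IsChain (· > ·) (l.take j) → j ≤ runlen l
  | [], j, hj, _ => by simpa [runlen_nil] using hj
  | [a], j, hj, _ => by simpa [runlen_single] using hj
  | a :: b :: t, j, hj, hc => by
      rcases j with _|_|j
      · omega
      · have := one_le_runlen (a :: b :: t) (by simp); omega
      · simp only [List.take_succ_cons] at hc
        rw [List.isChain_cons_cons] at hc
        obtain ⟨hab, hc⟩ := hc
        have h1 : j + 1 ≤ runlen (b :: t) :=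
          le_runlen_of_chain' (b :: t) (j+1) (by simpa using hj) (by simpa using hc)
        rw [runlen_cons_cons, if_pos hab]
        omega

-- continuation (tested with part1 prepended)
lemma runlen_cons_of_head (a : ℕ) (l : List ℕ) (hne : l ≠ []) (h : l.headI < a) :
    runlen (a :: l) = runlen l + 1 := by
  rcases l with _ | ⟨b, t⟩
  · exact absurd rfl hne
  · rw [runlen_cons_cons, if_pos (by simpa using h)]

lemma Avo.sublist {l l' : List ℕ} (h : Avo l) (hs : l' <+ l) : Avo l' :=
  fun a b c hsub hab hbc => h a b c (hsub.trans hs) hab hbc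

lemma not_chain'_pair {l : List ℕ} (h : ¬ List.IsChain (· > ·) l) :
    ∃ x y, [x, y] <+ l ∧ ¬ (x > y) := by
  induction l with
  | nil => exact absurd List.isChain_nil h
  | cons a t ih =>
    rcases t with _ | ⟨b, t'⟩
    · exact absurd (List.isChain_singleton a) h
    · rw [List.isChain_cons_cons] at h
      push_neg at h
      by_cases hab : a > b
      · obtain ⟨x, y, hxy, hr⟩ := ih (h hab)
        exact ⟨x, y, hxy.trans (List.sublist_cons_self _ _), hr⟩
      · exact ⟨a, b, by
          refine List.Sublist.cons₂ _ ?_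
          exact (List.singleton_sublist.mpr (List.mem_cons_self)), hab⟩

lemma pair_sublist_of_get {l : List ℕ} {i j : ℕ} (hij : i < j) (hj : j < l.length) :
    [l[i], l[j]] <+ l := by
  have hdi : l.drop i <+ l := List.drop_sublist i l
  have h1 : l[i] :: l.drop (i+1) = l.drop i := List.getElem_cons_drop (as := l) (i := i) (by omega)
  have h2 : l[j] ∈ l.drop (i+1) := by
    rw [List.mem_drop_iff_getElem]
    exact ⟨j - (i+1), by omega, by congr 1; omega⟩
  calc [l[i], l[j]] <+ l[i] :: l.drop (i+1) :=
        List.Sublist.cons₂ _ (List.singleton_sublist.mpr h2)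
    _ = l.drop i := h1
    _ <+ l := hdi

lemma triple_sublist_of_get {l : List ℕ} {i j k : ℕ} (hij : i < j) (hjk : j < k)
    (hk : k < l.length) : [l[i], l[j], l[k]] <+ l := by
  have h1 : l[i] :: l.drop (i+1) = l.drop i := List.getElem_cons_drop (as := l) (i := i) (by omega)
  have hlen : i + 1 ≤ l.length := by omega
  have hj' : j - (i+1) < (l.drop (i+1)).length := by simp [List.length_drop]; omega
  have hk' : k - (i+1) < (l.drop (i+1)).length := by simp [List.length_drop]; omega
  have e1 : (l.drop (i+1))[j - (i+1)] = l[j] := by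
    rw [List.getElem_drop]; congr 1; omega
  have e2 : (l.drop (i+1))[k - (i+1)] = l[k] := by
    rw [List.getElem_drop]; congr 1; omega
  have hpair : [l[j], l[k]] <+ l.drop (i+1) := by
    have := pair_sublist_of_get (l := l.drop (i+1)) (i := j - (i+1)) (j := k - (i+1))
      (by omega) hk'
    rwa [e1, e2] at this
  calc [l[i], l[j], l[k]] <+ l[i] :: l.drop (i+1) := List.Sublist.cons₂ _ hpair
    _ = l.drop i := h1
    _ <+ l := List.drop_sublist i l

section MapMono
variable {f : ℕ → ℕ} {l : List ℕ}

def MonoOn (f : ℕ → ℕ) (l : List ℕ) : Prop :=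
  ∀ x ∈ l, ∀ y ∈ l, (x < y ↔ f x < f y)

lemma MonoOn.sublist {l' : List ℕ} (h : MonoOn f l) (hs : l' <+ l) : MonoOn f l' :=
  fun x hx y hy => h x (hs.mem hx) y (hs.mem hy)

lemma avo_map (h : Avo l) (hf : MonoOn f l) : Avo (l.map f) := by
  intro a b c hsub hab hbc
  rw [List.sublist_map_iff] at hsub
  obtain ⟨l', hl', he⟩ := hsub
  rcases l' with _ | ⟨x, l'⟩; · simp at he
  rcases l' with _ | ⟨y, l'⟩; · simp at he
  rcases l' with _ | ⟨z, l'⟩; · simp at he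
  rcases l' with _ | ⟨u, l'⟩
  swap; · simp at he
  simp only [List.map_cons, List.map_nil, List.cons.injEq, and_true] at he
  obtain ⟨ha, hb, hc⟩ := he
  have hxm : x ∈ l := hl'.mem (by simp)
  have hym : y ∈ l := hl'.mem (by simp)
  have hzm : z ∈ l := hl'.mem (by simp)
  exact h x y z hl' ((hf x hxm y hym).mpr (ha ▸ hb ▸ hab))
    ((hf y hym z hzm).mpr (hb ▸ hc ▸ hbc))

lemma splAt_of_map {s : ℕ} (h : SplAt (l.map f) s) (hf : MonoOn f l) : SplAt l s := by
  obtain ⟨h0, hlen, hxy⟩ := h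
  rw [List.length_map] at hlen
  refine ⟨h0, hlen, fun x hx y hy => ?_⟩
  have hx' : f x ∈ (l.map f).take s := by
    rw [← List.map_take]; exact List.mem_map_of_mem (f := f) hx
  have hy' : f y ∈ (l.map f).drop s := by
    rw [← List.map_drop]; exact List.mem_map_of_mem (f := f) hy
  have := hxy _ hx' _ hy'
  exact (hf y ((l.drop_sublist s).mem hy) x ((l.take_sublist s).mem hx)).mpr this

lemma splAt_map {s : ℕ} (h : SplAt l s) (hf : MonoOn f l) : SplAt (l.map f) s := by
  obtain ⟨h0, hlen, hxy⟩ := h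
  refine ⟨h0, by simpa using hlen, fun x hx y hy => ?_⟩
  rw [← List.map_take, List.mem_map] at hx
  rw [← List.map_drop, List.mem_map] at hy
  obtain ⟨x', hx', rfl⟩ := hx
  obtain ⟨y', hy', rfl⟩ := hy
  exact (hf y' ((l.drop_sublist s).mem hy') x' ((l.take_sublist s).mem hx')).mp
    (hxy x' hx' y' hy')

lemma runlen_map : ∀ (l : List ℕ), MonoOn f l → runlen (l.map f) = runlen l
  | [], _ => rfl
  | [_], _ => rfl
  | a :: b :: t, hf => by
      have hab : b < a ↔ f b < f a :=
        hf b (by simp) a (by simp)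
      have ht : MonoOn f (b :: t) := hf.sublist (List.sublist_cons_self _ _)
      simp only [List.map_cons]
      rw [runlen_cons_cons, runlen_cons_cons]
      by_cases hba : b < a
      · rw [if_pos (hab.mp hba), if_pos hba]
        have := runlen_map (b :: t) ht
        simp only [List.map_cons] at this
        omega
      · rw [if_neg (fun hc => hba (hab.mpr hc)), if_neg hba]

end MapMono

section PermRange
variable {n : ℕ} {w : List ℕ}

lemma perm_range_mem (hw : w ~ List.range n) {x : ℕ} : x ∈ w ↔ x < n := by
  rw [hw.mem_iff, List.mem_range]

lemma perm_range_nodup (hw : w ~ List.range n) : w.Nodup :=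
  hw.nodup_iff.mpr (List.nodup_range (n := n))

lemma perm_range_length (hw : w ~ List.range n) : w.length = n := by
  simpa using hw.length_eq

lemma perm_range_lt (hw : w ~ List.range n) {x : ℕ} (hx : x ∈ w) : x < n :=
  (perm_range_mem hw).mp hx

end PermRange

section Struct
variable {n : ℕ} {w : List ℕ}

lemma splAt_one_of_head_max (hn : 2 ≤ n) (hw : w ~ List.range n)
    (hh : w.head? = some (n-1)) : SplAt w 1 := by
  rcases w with _ | ⟨a, t⟩
  · simp at hh
  simp only [List.head?_cons, Option.some.injEq] at hh
  subst hh
  have hlen : t.length = n - 1 := by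
    have := perm_range_length hw; simp at this; omega
  have hnd := perm_range_nodup hw
  refine ⟨by omega, by simp [hlen]; omega, ?_⟩
  intro x hx y hy
  simp only [List.take_succ_cons, List.take_zero, List.mem_singleton] at hx
  subst hx
  simp only [List.drop_succ_cons, List.drop_zero] at hy
  have hy1 : y < n := perm_range_lt hw (by simp [hy])
  have hy2 : y ≠ n - 1 := by
    rintro rfl
    exact (List.nodup_cons.mp hnd).1 hy
  omega

lemma head_ne_max_of_not_spl (hn : 2 ≤ n) (hw : w ~ List.range n) (hns : ¬ Spl w) :
    w.head? ≠ some (n-1) := fun hh => hns ⟨1, splAt_one_of_head_max hn hw hh⟩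

lemma decomp_max (hn : 2 ≤ n) (hw : w ~ List.range n)
    (havo : Avo w) (hns : ¬ Spl w) :
    ∃ A B, w = A ++ (n-1) :: B ∧ A ≠ [] ∧ A.length = runlen w ∧
      List.IsChain (· > ·) A := by
  have hmem : (n-1) ∈ w := (perm_range_mem hw).mpr (by omega)
  obtain ⟨A, B, rfl⟩ := List.append_of_mem hmem
  have hnd : (A ++ (n-1) :: B).Nodup := perm_range_nodup hw
  have hAnd : A.Nodup := hnd.of_append_left
  have hnotinA : (n-1) ∉ A := by
    have := List.disjoint_of_nodup_append hnd
    intro hA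
    exact this hA (by simp)
  have hAne : A ≠ [] := by
    rintro rfl
    apply hns
    exact ⟨1, splAt_one_of_head_max hn hw (by simp)⟩
  have hAlt : ∀ x ∈ A, x < n - 1 := by
    intro x hx
    have h1 : x < n := perm_range_lt hw (by simp [hx])
    have h2 : x ≠ n - 1 := fun h => hnotinA (h ▸ hx)
    omega
  have hchain : List.IsChain (· > ·) A := by
    by_contra hc
    obtain ⟨x, y, hxy, hr⟩ := not_chain'_pair hc
    have hne : x ≠ y := by
      have : [x, y].Nodup := hAnd.sublist hxy
      simpa using (List.nodup_cons.mp this).1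
    have hxlty : x < y := by omega
    have hy : y < n - 1 := hAlt y (hxy.mem (by simp))
    have htr : [x, y, n-1] <+ A ++ (n-1) :: B := by
      have : [x,y] ++ [n-1] <+ A ++ (n-1) :: B :=
        List.Sublist.append hxy (List.singleton_sublist.mpr (by simp))
      simpa using this
    exact havo x y (n-1) htr hxlty hy
  refine ⟨A, B, rfl, hAne, ?_, hchain⟩
  have hlen : (A ++ (n-1) :: B).length = n := perm_range_length hw
  have h1 : A.length ≤ runlen (A ++ (n-1) :: B) := by
    apply le_runlen_of_chain'
    · simp
    · rw [List.take_left]; exact hchain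
  have h2 : runlen (A ++ (n-1) :: B) ≤ A.length := by
    by_contra hc
    push_neg at hc
    have hch2 := chain'_take_of_le_runlen _ (A.length + 1) hc
    have heq : (A ++ (n-1) :: B).take (A.length + 1) = A ++ [n-1] := by
      rw [List.take_append, List.take_of_length_le (by omega)]
      congr 1
      simp
    rw [heq, List.isChain_append] at hch2
    obtain ⟨-, -, hlast⟩ := hch2
    have hlm : A.getLast hAne ∈ A := List.getLast_mem hAne
    have := hlast (A.getLast hAne) (by simp [List.getLast?_eq_getLast hAne]) (n-1) (by simp)
    have := hAlt _ hlm
    omega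
  omega

end Struct

def fdn (n : ℕ) : ℕ → ℕ := fun x => min x (n-2)
def gup (n : ℕ) : ℕ → ℕ := fun x => if x = n-2 then n-1 else x

noncomputable def phiF (n : ℕ) : List ℕ → List ℕ := fun w =>
  if w.head? = some (n-2) then (w.tail).map (fdn n) else w.erase (n-1)

noncomputable def psiF (n j : ℕ) : List ℕ → List ℕ := fun v =>
  if j ≤ runlen v then v.insertIdx j (n-1) else (n-2) :: v.map (gup n)

section Bij
variable {n j : ℕ}

lemma middle_perm {A B : List ℕ} (hn : 1 ≤ n) (hw : A ++ (n-1) :: B ~ List.range n) :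
    (A ++ B) ~ List.range (n-1) := by
  have hr : List.range n = List.range (n-1) ++ [n-1] := by
    conv_lhs => rw [show n = (n-1) + 1 by omega]
    exact List.range_succ (n := n-1)
  have h1 : (n-1) :: (A ++ B) ~ List.range n := List.perm_middle.symm.trans hw
  have h2 : List.range n ~ (n-1) :: List.range (n-1) := by
    rw [hr]
    have := List.perm_middle (a := n-1) (l₁ := List.range (n-1)) (l₂ := ([] : List ℕ))
    simpa using this
  exact (h1.trans h2).cons_inv

lemma side_lt {A B : List ℕ} (hw : A ++ (n-1) :: B ~ List.range n) :
    ∀ x ∈ A ++ B, x < n - 1 := by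
  intro x hx
  have hnd := perm_range_nodup hw
  have hxn : x < n := perm_range_lt hw (by
    rcases List.mem_append.mp hx with h | h
    · exact List.mem_append.mpr (Or.inl h)
    · exact List.mem_append.mpr (Or.inr (by simp [h])))
  have hne : x ≠ n - 1 := by
    rintro rfl
    rcases List.mem_append.mp hx with h | h
    · exact List.disjoint_of_nodup_append hnd h (by simp)
    · exact (List.nodup_cons.mp hnd.of_append_right).1 h
  omega

lemma chain'_gt_head {a : ℕ} {t : List ℕ} (h : List.IsChain (· > ·) (a :: t)) :
    ∀ y ∈ t, y < a := by
  rw [List.isChain_iff_pairwise] at h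
  exact fun y hy => (List.pairwise_cons.mp h).1 y hy

/-- Forward map lands in the target set. -/
lemma phi_mem (hn : 3 ≤ n) (hj1 : 1 ≤ j) (hj2 : j ≤ n - 1) {w : List ℕ}
    (hw : w ~ List.range n) (havo : Avo w) (hns : ¬ Spl w) (hrun : runlen w = j) :
    (phiF n w ~ List.range (n-1)) ∧ Avo (phiF n w) ∧ ¬ Spl (phiF n w) ∧
      j - 1 ≤ runlen (phiF n w) := by
  obtain ⟨A, B, hdec, hAne, hAlen, hchain⟩ := decomp_max (by omega) hw havo hns
  subst hdec
  have hnd := perm_range_nodup hw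
  have hlenw : (A ++ (n-1) :: B).length = n := perm_range_length hw
  have hAj : A.length = j := by omega
  have hnA : (n-1) ∉ A := fun h => List.disjoint_of_nodup_append hnd h (by simp)
  have hnB : (n-1) ∉ B := (List.nodup_cons.mp hnd.of_append_right).1
  have hsl := side_lt hw
  by_cases hcase : (A ++ (n-1) :: B).head? = some (n-2)
  · -- case B : head = n-2
    obtain ⟨a, A', rfl⟩ : ∃ a A', A = a :: A' := by
      rcases A with _ | ⟨a, A'⟩; · exact absurd rfl hAne
      · exact ⟨a, A', rfl⟩
    have ha : a = n - 2 := by simpa using hcase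
    subst ha
    -- j ≥ 2
    have hj2' : 2 ≤ j := by
      by_contra hc
      have hj1' : j = 1 := by omega
      have hA' : A' = [] := by
        have : A'.length = 0 := by simp at hAj; omega
        simpa [List.length_eq_zero_iff] using this
      subst hA'
      apply hns
      refine ⟨2, by omega, by simp at hlenw ⊢; omega, ?_⟩
      intro x hx y hy
      simp only [List.cons_append, List.nil_append] at hx hy ⊢
      have hx' : x ∈ [n-2, n-1] := by
        have e : ((n-2) :: (n-1) :: B).take 2 = [n-2, n-1] := by
          simp [List.take_succ_cons]
        rwa [e] at hx
      have hyB : y ∈ B := by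
        have e : ((n-2) :: (n-1) :: B).drop 2 = B := by
          simp [List.drop_succ_cons]
        rwa [e] at hy
      have hy1 : y < n - 1 := hsl y (by simp [hyB])
      have hy2 : y ≠ n - 2 := by
        rintro rfl
        have hnd2 : ((n-2) :: ((n-1) :: B)).Nodup := by
          have := hnd
          simpa using this
        exact (List.nodup_cons.mp hnd2).1 (by simp [hyB])
      simp only [List.mem_cons, List.mem_singleton, List.not_mem_nil, or_false] at hx'
      rcases hx' with rfl | rfl
      · omega
      · omega
    -- the tail
    have htail : (((n-2) :: A') ++ (n-1) :: B).tail = A' ++ (n-1) :: B := by simp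
    have hphi : phiF n (((n-2) :: A') ++ (n-1) :: B) = (A' ++ (n-1) :: B).map (fdn n) := by
      rw [phiF, if_pos hcase, htail]
    set t := A' ++ (n-1) :: B with ht
    have htmem : ∀ x ∈ t, x < n ∧ x ≠ n - 2 := by
      intro x hx
      constructor
      · exact perm_range_lt hw (by simp [ht] at hx ⊢; tauto)
      · rintro rfl
        have hnd2 : ((n-2) :: (A' ++ (n-1) :: B)).Nodup := by
          rwa [List.cons_append] at hnd
        exact (List.nodup_cons.mp hnd2).1 hx
    have hmono : MonoOn (fdn n) t := by
      intro x hx y hy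
      have h1 := htmem x hx
      have h2 := htmem y hy
      simp only [fdn]
      omega
    have htavo : Avo t := havo.sublist (by simpa [ht] using List.tail_sublist (((n-2) :: A') ++ (n-1) :: B))
    refine ⟨?_, ?_, ?_, ?_⟩
    · -- permutation
      rw [hphi]
      have hperm1 : (n-2) :: t ~ List.range n := by simpa [ht] using hw
      have hr2 : List.range n ~ (n-2) :: (List.range (n-2) ++ [n-1]) := by
        have e1 : List.range n = (List.range (n-2) ++ [n-2]) ++ [n-1] := by
          obtain ⟨m, rfl⟩ : ∃ m, n = m + 2 := ⟨n - 2, by omega⟩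
          simp [List.range_succ]
        rw [e1, List.append_assoc]
        exact List.perm_middle
      have hperm2 : t ~ List.range (n-2) ++ [n-1] := (hperm1.trans hr2).cons_inv
      have hp3 : t.map (fdn n) ~ (List.range (n-2) ++ [n-1]).map (fdn n) := hperm2.map _
      refine hp3.trans ?_
      have e2 : (List.range (n-2) ++ [n-1]).map (fdn n) = List.range (n-2) ++ [n-2] := by
        rw [List.map_append]
        have e3 : List.map (fdn n) (List.range (n-2)) = List.range (n-2) := by
          have : List.map (fdn n) (List.range (n-2)) = List.map id (List.range (n-2)) :=
            List.map_congr_left (fun x hx => by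
              have := List.mem_range.mp hx
              simp only [fdn, id]
              omega)
          rw [this, List.map_id]
        rw [e3]
        congr 1
        simp only [List.map_cons, List.map_nil, fdn]
        congr 1
        omega
      rw [e2, show n - 1 = (n-2) + 1 by omega, List.range_succ]
    · exact hphi ▸ avo_map htavo hmono
    · rw [hphi]
      rintro ⟨s, hsp⟩
      have hst : SplAt t s := splAt_of_map hsp hmono
      obtain ⟨hs0, hslen, hcond⟩ := hst
      apply hns
      refine ⟨s + 1, by omega, ?_, ?_⟩
      · simp only [List.cons_append, List.length_cons]
        simp only [ht] at hslen
        simpa using Nat.succ_lt_succ hslen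
      · intro x hx y hy
        have e3 : ((n-2) :: t).take (s+1) = (n-2) :: t.take s := by simp
        have e4 : ((n-2) :: t).drop (s+1) = t.drop s := by simp
        simp only [List.cons_append] at hx hy
        rw [show ((n-2) :: (A' ++ (n-1) :: B)) = (n-2) :: t from rfl] at hx hy
        rw [e3] at hx
        rw [e4] at hy
        have hyd : y ∈ t.drop s := hy
        rcases List.mem_cons.mp hx with rfl | hxt
        · -- x = n-2 : show y < n-2
          have hy1 : y < n := (htmem y ((t.drop_sublist s).mem hyd)).1
          have hy2 : y ≠ n - 2 := (htmem y ((t.drop_sublist s).mem hyd)).2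
          have hy3 : y ≠ n - 1 := by
            rintro rfl
            -- n-1 would be in drop, but n-1 must be in take
            have hmax : (n-1) ∈ t.take s := by
              have hm : (n-1) ∈ t := by simp [ht]
              rcases List.mem_append.mp ((List.take_append_drop s t) ▸ hm) with h | h
              · exact h
              · exfalso
                have hne : t.take s ≠ [] := by
                  have : (t.take s).length = s := by
                    rw [List.length_take]
                    simp only [ht] at hslen ⊢
                    omega
                  intro hnil; rw [hnil] at this; simp at this; omega
                obtain ⟨x0, hx0⟩ := List.exists_mem_of_ne_nil _ hne
                have := hcond x0 hx0 (n-1) h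
                have : x0 < n := (htmem x0 ((t.take_sublist s).mem hx0)).1
                omega
            have hndt : t.Nodup := by
              have : ((n-2) :: t).Nodup := by simpa [ht] using hnd
              exact (List.nodup_cons.mp this).2
            have hdisj := List.disjoint_of_nodup_append
              ((List.take_append_drop s t).symm ▸ hndt)
            exact hdisj hmax hyd
          omega
        · exact hcond x hxt y hyd
    · rw [hphi, runlen_map _ hmono]
      have : j - 1 ≤ runlen t := by
        apply le_runlen_of_chain'
        · simp only [ht, List.length_append, List.length_cons]
          have : A'.length = j - 1 := by simp at hAj; omega
          omega
        · have e5 : t.take (j-1) = A' := by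
            rw [ht]
            apply List.take_left'
            simp at hAj; omega
          rw [e5]
          exact hchain.tail
      exact this
  · -- case A : head ≠ n-2
    have hphi : phiF n (A ++ (n-1) :: B) = A ++ B := by
      rw [phiF, if_neg hcase, List.erase_append_right _ (by simpa using hnA),
        List.erase_cons_head]
    have hperm : (A ++ B) ~ List.range (n-1) := middle_perm (by omega) hw
    have hsub : (A ++ B) <+ (A ++ (n-1) :: B) :=
      List.Sublist.append_left (List.sublist_cons_self _ _) A
    refine ⟨hphi ▸ hperm, hphi ▸ havo.sublist hsub, ?_, ?_⟩
    · rw [hphi]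
      rintro ⟨s, hs0, hslen, hcond⟩
      by_cases hsA : s ≤ A.length
      · -- head must be n-2, contradiction
        have htks : (A ++ B).take s = A.take s := by
          rw [List.take_append, Nat.sub_eq_zero_of_le hsA]
          simp
        have hm2 : (n-2) ∈ A ++ B := by
          have : (n-2) ∈ List.range (n-1) := by simp; omega
          exact hperm.symm.subset this
        have hm2' : (n-2) ∈ A.take s := by
          rcases List.mem_append.mp ((List.take_append_drop s (A ++ B)) ▸ hm2) with h | h
          · rwa [htks] at h
          · exfalso
            have hne : (A ++ B).take s ≠ [] := by
              have : ((A ++ B).take s).length = s := by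
                rw [List.length_take]; omega
              intro hnil; rw [hnil] at this; simp at this; omega
            obtain ⟨x0, hx0⟩ := List.exists_mem_of_ne_nil _ hne
            have h1 := hcond x0 hx0 (n-2) h
            have h2 : x0 < n - 1 := hsl x0 ((List.take_sublist s _).mem hx0)
            omega
        -- n-2 is in the decreasing prefix A.take s, so head of A is n-2
        obtain ⟨a, A', rfl⟩ : ∃ a A', A = a :: A' := by
          rcases A with _ | ⟨a, A'⟩; · exact absurd rfl hAne
          · exact ⟨a, A', rfl⟩
        have hts : (a :: A').take s = a :: A'.take (s-1) := by
          rw [show s = (s-1) + 1 by omega]; simp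
        rw [hts] at hm2'
        have ha2 : a = n - 2 := by
          rcases List.mem_cons.mp hm2' with h | h
          · omega
          · exfalso
            have hch : List.IsChain (· > ·) (a :: A'.take (s-1)) := by
              rw [← hts]
              exact hchain.take s
            have := chain'_gt_head hch (n-2) h
            have : a < n - 1 := hsl a (by simp)
            omega
        exact hcase (by simp [ha2])
      · -- s > |A| : lift the split to w
        push_neg at hsA
        set u := s - A.length with hu
        have hsu : s = A.length + u := by omega
        apply hns
        refine ⟨s + 1, by omega, ?_, ?_⟩
        · simp only [List.length_append, List.length_cons]
          simp only [List.length_append] at hslen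
          omega
        · intro x hx y hy
          have e1 : (A ++ (n-1) :: B).take (s+1) = A ++ (n-1) :: B.take u := by
            rw [show s + 1 = A.length + (u+1) by omega, List.take_append]
            simp
          have e2 : (A ++ (n-1) :: B).drop (s+1) = B.drop u := by
            rw [show s + 1 = A.length + (u+1) by omega, List.drop_append]
            simp
          have e3 : (A ++ B).take s = A ++ B.take u := by
            rw [hsu, List.take_length_add_append]
          have e4 : (A ++ B).drop s = B.drop u := by
            rw [hsu, List.drop_length_add_append]
          rw [e1] at hx
          rw [e2] at hy
          have hyd : y ∈ (A ++ B).drop s := by rw [e4]; exact hy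
          rcases List.mem_append.mp hx with hxA | hxm
          · exact hcond x (by rw [e3]; exact List.mem_append.mpr (Or.inl hxA)) y hyd
          · rcases List.mem_cons.mp hxm with rfl | hxB
            · -- x = n-1
              have hyB : y ∈ B := (List.drop_sublist u B).mem hy
              have : y < n - 1 := hsl y (List.mem_append.mpr (Or.inr hyB))
              omega
            · exact hcond x (by rw [e3]; exact List.mem_append.mpr (Or.inr hxB)) y hyd
    · rw [hphi]
      have : j ≤ runlen (A ++ B) := by
        apply le_runlen_of_chain'
        · have : (A ++ B).length = n - 1 := perm_range_length hperm
          omega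
        · rw [← hAj, List.take_left]
          exact hchain
      omega

end Bij

section Bij2
variable {n j : ℕ}

lemma insertIdx_append_length : ∀ (A B : List ℕ) (x : ℕ),
    (A ++ B).insertIdx A.length x = A ++ x :: B
  | [], B, x => rfl
  | a :: A, B, x => by
      simp only [List.cons_append, List.length_cons, List.insertIdx_succ_cons,
        insertIdx_append_length A B x]

lemma range_reorder (hn : 2 ≤ n) :
    List.range n ~ (n-2) :: (List.range (n-2) ++ [n-1]) := by
  have e1 : List.range n = (List.range (n-2) ++ [n-2]) ++ [n-1] := by
    obtain ⟨m, rfl⟩ : ∃ m, n = m + 2 := ⟨n - 2, by omega⟩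
    simp [List.range_succ]
  rw [e1, List.append_assoc]
  exact List.perm_middle

lemma middle_perm' {A B : List ℕ} (hn : 1 ≤ n) (h : (A ++ B) ~ List.range (n-1)) :
    A ++ (n-1) :: B ~ List.range n := by
  have hr : List.range n = List.range (n-1) ++ [n-1] := by
    conv_lhs => rw [show n = (n-1) + 1 by omega]
    exact List.range_succ (n := n-1)
  have h2 : List.range n ~ (n-1) :: List.range (n-1) := by
    rw [hr]
    have := List.perm_middle (a := n-1) (l₁ := List.range (n-1)) (l₂ := ([] : List ℕ))
    simpa using this
  exact List.perm_middle.trans ((h.cons (n-1)).trans h2.symm)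

lemma map_gup_perm (hn : 3 ≤ n) {v : List ℕ} (hv : v ~ List.range (n-1)) :
    (n-2) :: v.map (gup n) ~ List.range n := by
  have h1 : v.map (gup n) ~ (List.range (n-1)).map (gup n) := hv.map _
  have e1 : (List.range (n-1)).map (gup n) = List.range (n-2) ++ [n-1] := by
    rw [show n - 1 = (n-2) + 1 by omega, List.range_succ, List.map_append]
    congr 1
    · have e : List.map (gup n) (List.range (n-2)) = List.map id (List.range (n-2)) :=
        List.map_congr_left (fun x hx => by
          have := List.mem_range.mp hx
          simp only [gup, id, if_neg (by omega : ¬ x = n - 2)])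
      rw [e, List.map_id]
    · simp only [List.map_cons, List.map_nil]
      congr 1
      unfold gup
      rw [if_pos rfl]
      omega
  rw [e1] at h1
  exact ((h1.cons (n-2)).trans (range_reorder (by omega)).symm)

lemma gup_mono (hn : 3 ≤ n) {v : List ℕ} (hvlt : ∀ x ∈ v, x < n - 1) :
    MonoOn (gup n) v := by
  intro x hx y hy
  have h1 := hvlt x hx
  have h2 := hvlt y hy
  simp only [gup]
  by_cases e1 : x = n - 2 <;> by_cases e2 : y = n - 2 <;> simp [e1, e2] <;> omega

/-- Backward map lands in the source set. -/
lemma psi_mem (hn : 3 ≤ n) (hj1 : 1 ≤ j) (hj2 : j ≤ n - 1) {v : List ℕ}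
    (hv : v ~ List.range (n-1)) (havo : Avo v) (hns : ¬ Spl v) (hrun : j - 1 ≤ runlen v) :
    (psiF n j v ~ List.range n) ∧ Avo (psiF n j v) ∧ ¬ Spl (psiF n j v) ∧
      runlen (psiF n j v) = j := by
  have hvlen : v.length = n - 1 := perm_range_length hv
  have hvlt : ∀ x ∈ v, x < n - 1 := fun x hx => perm_range_lt hv hx
  by_cases hc : j ≤ runlen v
  · -- insert case
    set A := v.take j with hA
    set B := v.drop j with hB
    have hAB : v = A ++ B := (List.take_append_drop j v).symm
    have hAlen : A.length = j := by
      rw [hA, List.length_take]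
      have := runlen_le_length v
      omega
    have hAne : A ≠ [] := by
      intro h
      rw [h] at hAlen
      simp at hAlen
      omega
    have hw : psiF n j v = A ++ (n-1) :: B := by
      have e : v.insertIdx j (n-1) = A ++ (n-1) :: B := by
        conv_lhs => rw [hAB, ← hAlen]
        exact insertIdx_append_length A B (n-1)
      rw [psiF, if_pos hc, e]
    have hchain : List.IsChain (· > ·) A := chain'_take_of_le_runlen v j hc
    have hAsub : A <+ v := List.take_sublist j v
    have hBsub : B <+ v := List.drop_sublist j v
    have hperm : A ++ (n-1) :: B ~ List.range n :=
      middle_perm' (by omega) (hAB ▸ hv)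
    have hwlen : (A ++ (n-1) :: B).length = n := perm_range_length hperm
    rw [hw]
    refine ⟨hperm, ?_, ?_, ?_⟩
    · -- Avo
      intro a b c hsub hab hbc
      rw [List.sublist_append_iff] at hsub
      obtain ⟨l₁, l₂, heq, h₁, h₂⟩ := hsub
      rcases l₁ with _ | ⟨x1, l₁⟩
      · simp only [List.nil_append] at heq
        subst heq
        rcases List.sublist_cons_iff.mp h₂ with h | ⟨r, hr, hrB⟩
        · exact havo a b c (h.trans hBsub) hab hbc
        · simp only [List.cons.injEq] at hr
          obtain ⟨rfl, hr2⟩ := hr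
          have hbB : b ∈ B := (hr2 ▸ hrB).mem (by simp)
          have : b < n - 1 := hvlt b (hBsub.mem hbB)
          omega
      rcases l₁ with _ | ⟨x2, l₁⟩
      · simp only [List.cons_append, List.nil_append, List.cons.injEq] at heq
        obtain ⟨rfl, heq2⟩ := heq
        rw [← heq2] at h₂
        rcases List.sublist_cons_iff.mp h₂ with h | ⟨r, hr, hrB⟩
        · have : [a] ++ [b,c] <+ A ++ B := List.Sublist.append h₁ h
          exact havo a b c (by rw [← hAB] at this; simpa using this) hab hbc
        · simp only [List.cons.injEq] at hr
          obtain ⟨rfl, hr2⟩ := hr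
          have hcB : c ∈ B := (hr2 ▸ hrB).mem (by simp)
          have : c < n - 1 := hvlt c (hBsub.mem hcB)
          omega
      rcases l₁ with _ | ⟨x3, l₁⟩
      · simp only [List.cons_append, List.nil_append, List.cons.injEq] at heq
        obtain ⟨rfl, rfl, -⟩ := heq
        have : List.IsChain (· > ·) [a, b] := hchain.sublist h₁
        rw [List.isChain_pair] at this
        omega
      rcases l₁ with _ | ⟨x4, l₁⟩
      · simp only [List.cons_append, List.nil_append, List.cons.injEq] at heq
        obtain ⟨rfl, rfl, rfl, -⟩ := heq
        exact havo a b c (h₁.trans hAsub) hab hbc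
      · exfalso
        have := congrArg List.length heq
        simp at this
    · -- not Spl
      rintro ⟨m, hm0, hmlen, hcond⟩
      rw [hwlen] at hmlen
      by_cases hmA : m ≤ A.length
      · -- n-1 is in the drop part, but everything there is smaller than take part
        have hdrop : (A ++ (n-1) :: B).drop m = A.drop m ++ (n-1) :: B := by
          rw [List.drop_append, Nat.sub_eq_zero_of_le hmA]
          simp
        have hmem : (n-1) ∈ (A ++ (n-1) :: B).drop m := by
          rw [hdrop]; simp
        have htne : (A ++ (n-1) :: B).take m ≠ [] := by
          have : ((A ++ (n-1) :: B).take m).length = m := by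
            rw [List.length_take]; omega
          intro h; rw [h] at this; simp at this; omega
        obtain ⟨x0, hx0⟩ := List.exists_mem_of_ne_nil _ htne
        have h1 := hcond x0 hx0 (n-1) hmem
        have h2 : x0 < n := perm_range_lt hperm ((List.take_sublist m _).mem hx0)
        omega
      · -- split of v at m-1
        push_neg at hmA
        set u := m - A.length - 1 with hu
        have hmu : m = A.length + (u + 1) := by omega
        apply hns
        refine ⟨m - 1, by omega, by rw [hvlen]; omega, ?_⟩
        intro x hx y hy
        have e1 : (A ++ (n-1) :: B).take m = A ++ (n-1) :: B.take u := by
          rw [hmu, List.take_append]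
          simp [List.take_succ_cons]
        have e2 : (A ++ (n-1) :: B).drop m = B.drop u := by
          rw [hmu, List.drop_append]
          simp [List.drop_succ_cons]
        have e3 : v.take (m-1) = A ++ B.take u := by
          rw [hAB, show m - 1 = A.length + u by omega, List.take_length_add_append]
        have e4 : v.drop (m-1) = B.drop u := by
          rw [hAB, show m - 1 = A.length + u by omega, List.drop_length_add_append]
        rw [e3] at hx
        rw [e4] at hy
        refine hcond x ?_ y (by rw [e2]; exact hy)
        rw [e1]
        rcases List.mem_append.mp hx with h | h
        · exact List.mem_append.mpr (Or.inl h)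
        · exact List.mem_append.mpr (Or.inr (by simp [h]))
    · -- runlen = j
      have h1 : j ≤ runlen (A ++ (n-1) :: B) := by
        apply le_runlen_of_chain'
        · omega
        · rw [← hAlen, List.take_left]
          exact hchain
      have h2 : ¬ (j + 1 ≤ runlen (A ++ (n-1) :: B)) := by
        intro hcon
        have hch := chain'_take_of_le_runlen _ (j+1) hcon
        have e : (A ++ (n-1) :: B).take (j+1) = A ++ [n-1] := by
          rw [← hAlen, show A.length + 1 = A.length + 1 by rfl, List.take_append]
          simp
        rw [e, List.isChain_append] at hch
        obtain ⟨-, -, hlast⟩ := hch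
        have hlm : A.getLast hAne ∈ A := List.getLast_mem hAne
        have := hlast (A.getLast hAne) (by simp [List.getLast?_eq_getLast hAne]) (n-1) (by simp)
        have := hvlt _ (hAsub.mem hlm)
        omega
      omega
  · -- prepend case
    have hvne : v ≠ [] := by
      intro h
      rw [h] at hvlen
      simp at hvlen
      omega
    have hrv : runlen v = j - 1 := by
      have := one_le_runlen v hvne
      omega
    have hj2' : 2 ≤ j := by
      have := one_le_runlen v hvne
      omega
    have hpsi : psiF n j v = (n-2) :: v.map (gup n) := by rw [psiF, if_neg hc]
    have hmono : MonoOn (gup n) v := gup_mono hn hvlt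
    have hmapval : ∀ z ∈ v.map (gup n), z < n ∧ (n - 2 < z → z = n - 1) := by
      intro z hz
      rw [List.mem_map] at hz
      obtain ⟨x, hx, rfl⟩ := hz
      have := hvlt x hx
      simp only [gup]
      by_cases e : x = n - 2 <;> simp [e] <;> omega
    rw [hpsi]
    refine ⟨map_gup_perm hn hv, ?_, ?_, ?_⟩
    · -- Avo
      intro a b c hsub hab hbc
      rcases List.sublist_cons_iff.mp hsub with h | ⟨r, hr, hrm⟩
      · exact avo_map havo hmono a b c h hab hbc
      · simp only [List.cons.injEq] at hr
        obtain ⟨rfl, hr2⟩ := hr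
        have hbm : b ∈ v.map (gup n) := (hr2 ▸ hrm).mem (by simp)
        have hcm : c ∈ v.map (gup n) := (hr2 ▸ hrm).mem (by simp)
        have h1 := hmapval b hbm
        have h2 := hmapval c hcm
        omega
    · -- not Spl
      rintro ⟨m, hm0, hmlen, hcond⟩
      simp only [List.length_cons, List.length_map] at hmlen
      rcases Nat.lt_or_ge m 2 with hm1 | hm2
      · -- m = 1 : n-1 is in the tail and bigger than n-2
        have hm1' : m = 1 := by omega
        have hmem : (n-1) ∈ v.map (gup n) := by
          rw [List.mem_map]
          exact ⟨n-2, (perm_range_mem hv).mpr (by omega), by simp [gup]⟩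
        have h1 := hcond (n-2) (by rw [hm1']; simp) (n-1) (by rw [hm1']; simpa using hmem)
        omega
      · -- m ≥ 2 : split of v at m-1
        apply hns
        have hsm : SplAt (v.map (gup n)) (m-1) := by
          refine ⟨by omega, by rw [List.length_map]; omega, ?_⟩
          intro x hx y hy
          refine hcond x ?_ y ?_
          · have e : ((n-2) :: v.map (gup n)).take m = (n-2) :: (v.map (gup n)).take (m-1) := by
              rw [show m = (m-1) + 1 by omega]
              simp
            rw [e]
            simp [hx]
          · have e : ((n-2) :: v.map (gup n)).drop m = (v.map (gup n)).drop (m-1) := by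
              rw [show m = (m-1) + 1 by omega]
              simp
            rw [e]
            exact hy
        exact ⟨m - 1, splAt_of_map hsm hmono⟩
    · -- runlen
      have hmapne : v.map (gup n) ≠ [] := by
        simp [hvne]
      have hhead : (v.map (gup n)).headI < n - 2 := by
        obtain ⟨a, t, rfl⟩ : ∃ a t, v = a :: t := by
          rcases v with _ | ⟨a, t⟩; · exact absurd rfl hvne
          · exact ⟨a, t, rfl⟩
        have hane : a ≠ n - 2 := by
          have := head_ne_max_of_not_spl (n := n - 1) (by omega) hv hns
          simp only [List.head?_cons, ne_eq, Option.some.injEq] at this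
          intro h
          exact this (by omega)
        have halt : a < n - 1 := hvlt a (by simp)
        simp only [List.map_cons, List.headI_cons, gup, if_neg hane]
        omega
      rw [runlen_cons_of_head _ _ hmapne hhead, runlen_map _ hmono, hrv]
      omega

end Bij2

section Bij3
variable {n j : ℕ}

lemma caseB_ne_nil (hn : 3 ≤ n) {A' B : List ℕ}
    (hw : ((n-2) :: A') ++ (n-1) :: B ~ List.range n)
    (hns : ¬ Spl (((n-2) :: A') ++ (n-1) :: B)) : A' ≠ [] := by
  rintro rfl
  apply hns
  have hlenw := perm_range_length hw
  have hnd := perm_range_nodup hw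
  refine ⟨2, by omega, by simp at hlenw ⊢; omega, ?_⟩
  intro x hx y hy
  simp only [List.cons_append, List.nil_append] at hx hy
  have hx' : x ∈ [n-2, n-1] := by
    have e : ((n-2) :: (n-1) :: B).take 2 = [n-2, n-1] := by
      simp [List.take_succ_cons]
    rwa [e] at hx
  have hyB : y ∈ B := by
    have e : ((n-2) :: (n-1) :: B).drop 2 = B := by
      simp [List.drop_succ_cons]
    rwa [e] at hy
  have hy1 : y < n := perm_range_lt hw (by simp [hyB])
  have hnd2 : ((n-2) :: ((n-1) :: B)).Nodup := by
    have := hnd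
    simpa using this
  have hy2 : y ≠ n - 2 := by
    rintro rfl
    exact (List.nodup_cons.mp hnd2).1 (by simp [hyB])
  have hy3 : y ≠ n - 1 := by
    rintro rfl
    exact (List.nodup_cons.mp ((List.nodup_cons.mp hnd2).2)).1 hyB
  simp only [List.mem_cons, List.mem_singleton, List.not_mem_nil, or_false] at hx'
  rcases hx' with rfl | rfl <;> omega

lemma psi_phi (hn : 3 ≤ n) (hj1 : 1 ≤ j) (hj2 : j ≤ n - 1) {w : List ℕ}
    (hw : w ~ List.range n) (havo : Avo w) (hns : ¬ Spl w) (hrun : runlen w = j) :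
    psiF n j (phiF n w) = w := by
  obtain ⟨A, B, hdec, hAne, hAlen, hchain⟩ := decomp_max (by omega) hw havo hns
  subst hdec
  have hnd := perm_range_nodup hw
  have hAj : A.length = j := by omega
  have hnA : (n-1) ∉ A := fun h => List.disjoint_of_nodup_append hnd h (by simp)
  have hsl := side_lt hw
  by_cases hcase : (A ++ (n-1) :: B).head? = some (n-2)
  · obtain ⟨a, A', rfl⟩ : ∃ a A', A = a :: A' := by
      rcases A with _ | ⟨a, A'⟩; · exact absurd rfl hAne
      · exact ⟨a, A', rfl⟩
    have ha : a = n - 2 := by simpa using hcase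
    subst ha
    have hA'ne : A' ≠ [] := caseB_ne_nil hn hw hns
    set t := A' ++ (n-1) :: B with ht
    have hphi : phiF n (((n-2) :: A') ++ (n-1) :: B) = t.map (fdn n) := by
      rw [phiF, if_pos hcase]
      simp [ht]
    have htmem : ∀ x ∈ t, x < n ∧ x ≠ n - 2 := by
      intro x hx
      constructor
      · exact perm_range_lt hw (by simp [ht] at hx ⊢; tauto)
      · rintro rfl
        have hnd2 : ((n-2) :: (A' ++ (n-1) :: B)).Nodup := by
          rwa [List.cons_append] at hnd
        exact (List.nodup_cons.mp hnd2).1 hx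
    have hmono : MonoOn (fdn n) t := by
      intro x hx y hy
      have h1 := htmem x hx
      have h2 := htmem y hy
      simp only [fdn]
      omega
    have hA'lt : ∀ x ∈ A', x < n - 1 := by
      intro x hx
      exact hsl x (by simp [hx])
    have hA'len : A'.length = j - 1 := by
      simp at hAj; omega
    have hrt : runlen t = j - 1 := by
      have h1 : j - 1 ≤ runlen t := by
        apply le_runlen_of_chain'
        · simp [ht, hA'len]
        · rw [ht, List.take_left' hA'len]
          exact hchain.tail
      have h2 : ¬ (j ≤ runlen t) := by
        intro hcon
        have hch := chain'_take_of_le_runlen t j hcon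
        have e : t.take j = A' ++ [n-1] := by
          rw [ht, show j = A'.length + 1 by omega, List.take_append]
          simp
        rw [e, List.isChain_append] at hch
        obtain ⟨-, -, hlast⟩ := hch
        have hlm : A'.getLast hA'ne ∈ A' := List.getLast_mem hA'ne
        have := hlast (A'.getLast hA'ne) (by simp [List.getLast?_eq_getLast hA'ne]) (n-1) (by simp)
        have := hA'lt _ hlm
        omega
      omega
    rw [hphi, psiF]
    rw [if_neg (by rw [runlen_map _ hmono, hrt]; omega)]
    have e2 : (t.map (fdn n)).map (gup n) = t := by
      rw [List.map_map]
      have : List.map (gup n ∘ fdn n) t = List.map id t :=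
        List.map_congr_left (fun x hx => by
          obtain ⟨h1, h2⟩ := htmem x hx
          simp only [Function.comp, fdn, gup, id]
          by_cases hx1 : x = n - 1
          · subst hx1
            simp only [show min (n-1) (n-2) = n - 2 by omega, if_pos rfl, if_true]
          · simp only [show min x (n-2) = x by omega, if_neg h2])
      rw [this, List.map_id]
    rw [e2]
    simp [ht]
  · -- case A
    have hphi : phiF n (A ++ (n-1) :: B) = A ++ B := by
      rw [phiF, if_neg hcase, List.erase_append_right _ (by simpa using hnA),
        List.erase_cons_head]
    have hperm : (A ++ B) ~ List.range (n-1) := middle_perm (by omega) hw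
    have hrAB : j ≤ runlen (A ++ B) := by
      apply le_runlen_of_chain'
      · have : (A ++ B).length = n - 1 := perm_range_length hperm
        omega
      · rw [← hAj, List.take_left]
        exact hchain
    rw [hphi, psiF, if_pos hrAB, ← hAj, insertIdx_append_length]

lemma phi_psi (hn : 3 ≤ n) (hj1 : 1 ≤ j) (hj2 : j ≤ n - 1) {v : List ℕ}
    (hv : v ~ List.range (n-1)) (havo : Avo v) (hns : ¬ Spl v) (hrun : j - 1 ≤ runlen v) :
    phiF n (psiF n j v) = v := by
  have hvlen : v.length = n - 1 := perm_range_length hv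
  have hvlt : ∀ x ∈ v, x < n - 1 := fun x hx => perm_range_lt hv hx
  have hheadv : v.head? ≠ some (n-2) := by
    have := head_ne_max_of_not_spl (n := n - 1) (by omega) hv hns
    rwa [show n - 1 - 1 = n - 2 by omega] at this
  by_cases hc : j ≤ runlen v
  · set A := v.take j with hA
    set B := v.drop j with hB
    have hAB : v = A ++ B := (List.take_append_drop j v).symm
    have hAlen : A.length = j := by
      rw [hA, List.length_take]
      have := runlen_le_length v
      omega
    have hAne : A ≠ [] := by
      intro h
      rw [h] at hAlen
      simp at hAlen
      omega
    have hw : psiF n j v = A ++ (n-1) :: B := by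
      have e : v.insertIdx j (n-1) = A ++ (n-1) :: B := by
        conv_lhs => rw [hAB, ← hAlen]
        exact insertIdx_append_length A B (n-1)
      rw [psiF, if_pos hc, e]
    have hheadw : (A ++ (n-1) :: B).head? = v.head? := by
      rw [List.head?_append_of_ne_nil _ hAne, hAB, List.head?_append_of_ne_nil _ hAne]
    have hnAmem : (n-1) ∉ A := by
      intro h
      have := hvlt (n-1) ((List.take_sublist j v).mem h)
      omega
    rw [hw, phiF, if_neg (by rw [hheadw]; exact hheadv),
      List.erase_append_right _ (by simpa using hnAmem), List.erase_cons_head, ← hAB]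
  · have hpsi : psiF n j v = (n-2) :: v.map (gup n) := by rw [psiF, if_neg hc]
    rw [hpsi, phiF, if_pos (by simp)]
    simp only [List.tail_cons, List.map_map]
    have : List.map (fdn n ∘ gup n) v = List.map id v :=
      List.map_congr_left (fun x hx => by
        have h1 := hvlt x hx
        simp only [Function.comp, fdn, gup, id]
        by_cases hx1 : x = n - 2
        · subst hx1
          rw [if_pos rfl]
          omega
        · rw [if_neg hx1]
          omega)
    rw [this, List.map_id]

end Bij3

noncomputable def NSF (n : ℕ) : Finset (List ℕ) :=
  ((List.range n).permutations.toFinset).filter (fun w => Avo w ∧ ¬ Spl w)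

lemma mem_NSF {n : ℕ} {w : List ℕ} :
    w ∈ NSF n ↔ (w ~ List.range n ∧ Avo w ∧ ¬ Spl w) := by
  simp only [NSF, Finset.mem_filter, List.mem_toFinset, List.mem_permutations]

noncomputable def Wc (n j : ℕ) : ℕ := ((NSF n).filter (fun w => runlen w = j)).card
noncomputable def Uc (n i : ℕ) : ℕ := ((NSF n).filter (fun w => i ≤ runlen w)).card

theorem Wc_rec {n j : ℕ} (hn : 3 ≤ n) (hj1 : 1 ≤ j) (hj2 : j ≤ n - 1) :
    Wc n j = Uc (n-1) (j-1) := by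
  unfold Wc Uc
  apply Finset.card_nbij' (phiF n) (psiF n j)
  · intro w hw
    rw [Finset.mem_coe, Finset.mem_filter, mem_NSF] at hw
    obtain ⟨⟨hp, ha, hs⟩, hr⟩ := hw
    obtain ⟨h1, h2, h3, h4⟩ := phi_mem hn hj1 hj2 hp ha hs hr
    exact Finset.mem_filter.mpr ⟨mem_NSF.mpr ⟨h1, h2, h3⟩, h4⟩
  · intro v hv
    rw [Finset.mem_coe, Finset.mem_filter, mem_NSF] at hv
    obtain ⟨⟨hp, ha, hs⟩, hr⟩ := hv
    obtain ⟨h1, h2, h3, h4⟩ := psi_mem hn hj1 hj2 hp ha hs hr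
    exact Finset.mem_filter.mpr ⟨mem_NSF.mpr ⟨h1, h2, h3⟩, h4⟩
  · intro w hw
    rw [Finset.mem_coe, Finset.mem_filter, mem_NSF] at hw
    obtain ⟨⟨hp, ha, hs⟩, hr⟩ := hw
    exact psi_phi hn hj1 hj2 hp ha hs hr
  · intro v hv
    rw [Finset.mem_coe, Finset.mem_filter, mem_NSF] at hv
    obtain ⟨⟨hp, ha, hs⟩, hr⟩ := hv
    exact phi_psi hn hj1 hj2 hp ha hs hr

lemma Uc_split (n i : ℕ) : Uc n i = Wc n i + Uc n (i+1) := by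
  unfold Uc Wc
  have hsplit : (NSF n).filter (fun w => i ≤ runlen w) =
      ((NSF n).filter (fun w => runlen w = i)) ∪ ((NSF n).filter (fun w => i + 1 ≤ runlen w)) := by
    rw [← Finset.filter_or]
    apply Finset.filter_congr
    intro w _
    constructor
    · intro h; omega
    · intro h; omega
  rw [hsplit]
  rw [Finset.card_union_of_disjoint (by
    rw [Finset.disjoint_left]
    intro w h1 h2
    rw [Finset.mem_filter] at h1 h2
    omega)]

lemma runlen_le_of_ns {n : ℕ} {w : List ℕ} (hn : 2 ≤ n) (hw : w ~ List.range n)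
    (hns : ¬ Spl w) : runlen w ≤ n - 1 := by
  by_contra hc
  push_neg at hc
  have hlen : w.length = n := perm_range_length hw
  have hrn : runlen w = n := by
    have := runlen_le_length w
    omega
  have hch : List.IsChain (· > ·) w := by
    have := chain'_take_of_le_runlen w n (by omega)
    rwa [List.take_of_length_le (by omega)] at this
  obtain ⟨a, t, rfl⟩ : ∃ a t, w = a :: t := by
    rcases w with _ | ⟨a, t⟩
    · simp at hlen; omega
    · exact ⟨a, t, rfl⟩
  apply hns
  refine ⟨1, by omega, by simp at hlen ⊢; omega, ?_⟩
  intro x hx y hy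
  simp only [List.take_succ_cons, List.take_zero, List.mem_singleton] at hx
  subst hx
  simp only [List.drop_succ_cons, List.drop_zero] at hy
  exact chain'_gt_head hch y hy

lemma Uc_zero_of_ge {n i : ℕ} (hn : 2 ≤ n) (hi : n ≤ i) : Uc n i = 0 := by
  unfold Uc
  rw [Finset.card_eq_zero, Finset.filter_eq_empty_iff]
  intro w hw
  rw [mem_NSF] at hw
  have := runlen_le_of_ns hn hw.1 hw.2.2
  omega

lemma Uc_total {n : ℕ} (hn : 1 ≤ n) : Uc n 1 = (NSF n).card := by
  unfold Uc
  rw [Finset.filter_true_of_mem]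
  intro w hw
  rw [mem_NSF] at hw
  apply one_le_runlen
  intro h
  have := perm_range_length hw.1
  rw [h] at this
  simp at this
  omega

lemma Uc_zero_eq {n : ℕ} (hn : 1 ≤ n) : Uc n 0 = Uc n 1 := by
  unfold Uc
  congr 1
  apply Finset.filter_congr
  intro w hw
  rw [mem_NSF] at hw
  simp only [Nat.zero_le, true_iff]
  apply one_le_runlen
  intro h
  have := perm_range_length hw.1
  rw [h] at this
  simp at this
  omega

lemma range_one : List.range 1 = [0] := by simp [List.range_succ]
lemma range_two : List.range 2 = [0, 1] := by simp [List.range_succ]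

lemma avo_of_short {w : List ℕ} (h : w.length ≤ 2) : Avo w := by
  intro a b c hsub _ _
  have := hsub.length_le
  simp at this
  omega

lemma NSF_one : NSF 1 = {[0]} := by
  ext w
  rw [mem_NSF]
  constructor
  · rintro ⟨hp, -, -⟩
    rw [_root_.range_one] at hp
    simpa using List.perm_singleton.mp hp
  · intro h
    simp only [Finset.mem_singleton] at h
    subst h
    refine ⟨by rw [_root_.range_one], avo_of_short (by simp), ?_⟩
    rintro ⟨s, h0, hlen, -⟩
    simp at hlen
    omega

lemma NSF_two : NSF 2 = {[0, 1]} := by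
  ext w
  rw [mem_NSF]
  constructor
  · rintro ⟨hp, ha, hs⟩
    have hlen : w.length = 2 := perm_range_length hp
    obtain ⟨a, b, rfl⟩ : ∃ a b, w = [a, b] := by
      rcases w with _ | ⟨a, _ | ⟨b, _ | ⟨c, t⟩⟩⟩ <;> simp at hlen
      exact ⟨a, b, rfl⟩
    have hnd := perm_range_nodup hp
    have hab : a ≠ b := by
      simp only [List.nodup_cons, List.mem_singleton, List.not_mem_nil,
        not_false_iff, and_true, List.nodup_nil] at hnd
      exact hnd
    have haw : a < 2 := perm_range_lt hp (by simp)
    have hbw : b < 2 := perm_range_lt hp (by simp)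
    have hcase : (a = 0 ∧ b = 1) ∨ (a = 1 ∧ b = 0) := by omega
    rcases hcase with ⟨rfl, rfl⟩ | ⟨rfl, rfl⟩
    · simp
    · exfalso
      apply hs
      refine ⟨1, by omega, by simp, ?_⟩
      intro x hx y hy
      simp at hx hy
      omega
  · intro h
    simp only [Finset.mem_singleton] at h
    subst h
    refine ⟨by rw [range_two], avo_of_short (by simp), ?_⟩
    rintro ⟨s, h0, hlen, hcond⟩
    simp at hlen
    have hs1 : s = 1 := by omega
    subst hs1
    have := hcond 0 (by simp) 1 (by simp)
    omega

lemma runlen_pair : runlen [0, 1] = 1 := by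
  rw [runlen_cons_cons]
  simp

lemma Uc_two_one : Uc 2 1 = 1 := by
  rw [Uc_total (by omega), NSF_two]
  simp

lemma Uc_one (i : ℕ) : Uc 1 i = if i ≤ 1 then 1 else 0 := by
  unfold Uc
  rw [NSF_one]
  by_cases h : i ≤ 1
  · rw [if_pos h, Finset.filter_true_of_mem (by
      intro w hw
      simp only [Finset.mem_singleton] at hw
      subst hw
      show i ≤ runlen [0]
      rw [runlen_single]
      omega)]
    simp
  · rw [if_neg h, Finset.card_eq_zero, Finset.filter_eq_empty_iff]
    intro w hw
    simp only [Finset.mem_singleton] at hw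
    subst hw
    show ¬ i ≤ runlen [0]
    rw [runlen_single]
    omega

theorem Uc_closed : ∀ n, 2 ≤ n → ∀ k, k ≤ n →
    Uc n (n - k) + Nat.choose (n + k - 2) n = Nat.choose (n + k - 2) (n - 1) := by
  intro n
  induction n using Nat.strong_induction_on with
  | _ n IH =>
    intro hn k
    rcases Nat.lt_or_ge n 3 with hn2 | hn3
    · -- n = 2
      have hn2' : n = 2 := by omega
      subst hn2'
      intro hk
      interval_cases k
      · rw [Uc_zero_of_ge (by omega) (by omega)]
        simp
      · rw [show 2 - 1 = 1 by rfl, Uc_two_one]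
        simp
      · rw [show 2 - 2 = 0 by rfl, Uc_zero_eq (by omega), Uc_two_one]
        decide
    · -- n ≥ 3
      induction k with
      | zero =>
        intro _
        rw [Nat.sub_zero, Uc_zero_of_ge (by omega) le_rfl,
          Nat.choose_eq_zero_of_lt (by omega), Nat.choose_eq_zero_of_lt (by omega)]
      | succ k IHk =>
        intro hk1
        have IHk' := IHk (by omega)
        rcases Nat.lt_or_ge (k+1) n with hklt | hkge
        · -- k+1 ≤ n-1
          set i := n - (k+1) with hi
          have hi1 : 1 ≤ i := by omega
          have e1 : Uc n i = Wc n i + Uc n (i+1) := Uc_split n i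
          have e2 : Wc n i = Uc (n-1) (i-1) := Wc_rec hn3 hi1 (by omega)
          have e3 : Uc n (i+1) + Nat.choose (n + k - 2) n = Nat.choose (n + k - 2) (n-1) := by
            have := IHk'
            rwa [show n - k = i + 1 by omega] at this
          have e4 : Uc (n-1) (i-1) + Nat.choose (n + k - 2) (n-1)
              = Nat.choose (n + k - 2) (n-2) := by
            have h := IH (n-1) (by omega) (by omega) (k+1) (by omega)
            have h1 : (n-1) - (k+1) = i - 1 := by omega
            have h2 : (n-1) + (k+1) - 2 = n + k - 2 := by omega
            have h3 : (n-1) - 1 = n - 2 := by omega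
            rwa [h1, h2, h3] at h
          have p1 : Nat.choose (n + k - 1) n
              = Nat.choose (n + k - 2) (n-1) + Nat.choose (n + k - 2) n := by
            have := Nat.choose_succ_succ (n + k - 2) (n - 1)
            simp only [Nat.succ_eq_add_one] at this
            have h1 : n + k - 2 + 1 = n + k - 1 := by omega
            have h2 : n - 1 + 1 = n := by omega
            rwa [h1, h2] at this
          have p2 : Nat.choose (n + k - 1) (n-1)
              = Nat.choose (n + k - 2) (n-2) + Nat.choose (n + k - 2) (n-1) := by
            have := Nat.choose_succ_succ (n + k - 2) (n - 2)
            simp only [Nat.succ_eq_add_one] at this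
            have h1 : n + k - 2 + 1 = n + k - 1 := by omega
            have h2 : n - 2 + 1 = n - 1 := by omega
            rwa [h1, h2] at this
          rw [show n + (k+1) - 2 = n + k - 1 by omega]
          omega
        · -- k+1 = n
          have hkn : k + 1 = n := by omega
          have ez : Uc n 0 = Uc n 1 := Uc_zero_eq (by omega)
          have e3 : Uc n 1 + Nat.choose (2*n - 3) n = Nat.choose (2*n - 3) (n-1) := by
            have := IHk'
            rwa [show n - k = 1 by omega, show n + k - 2 = 2*n - 3 by omega] at this
          have p1 : Nat.choose (2*n - 2) n
              = Nat.choose (2*n - 3) (n-1) + Nat.choose (2*n - 3) n := by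
            have := Nat.choose_succ_succ (2*n - 3) (n - 1)
            simp only [Nat.succ_eq_add_one] at this
            rwa [show 2*n - 3 + 1 = 2*n - 2 by omega, show n - 1 + 1 = n by omega] at this
          have p2 : Nat.choose (2*n - 2) (n-1)
              = Nat.choose (2*n - 3) (n-2) + Nat.choose (2*n - 3) (n-1) := by
            have := Nat.choose_succ_succ (2*n - 3) (n - 2)
            simp only [Nat.succ_eq_add_one] at this
            rwa [show 2*n - 3 + 1 = 2*n - 2 by omega, show n - 2 + 1 = n - 1 by omega] at this
          have psym : Nat.choose (2*n - 3) (n-2) = Nat.choose (2*n - 3) (n-1) := by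
            have := Nat.choose_symm (show n - 1 ≤ 2*n - 3 by omega)
            rwa [show 2*n - 3 - (n-1) = n - 2 by omega] at this
          rw [show n + (k+1) - 2 = 2*n - 2 by omega, show n - (k+1) = 0 by omega]
          omega

lemma catalan_id (m' : ℕ) :
    catalan (m'+1) + Nat.choose (2*m'+1) (m'+2) = Nat.choose (2*m'+1) (m'+1) := by
  set C := Nat.choose (2*m'+1) (m'+1) with hC
  have h1 : (m'+2) * catalan (m'+1) = 2 * C := by
    have e1 : (m'+1+1) * catalan (m'+1) = Nat.centralBinom (m'+1) :=
      succ_mul_catalan_eq_centralBinom (m'+1)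
    have e2 : Nat.centralBinom (m'+1) = Nat.choose (2*m'+2) (m'+1) := by
      have h : 2*(m'+1) = 2*m'+2 := by omega
      rw [Nat.centralBinom, h]
    have e3 : Nat.choose (2*m'+2) (m'+1)
        = Nat.choose (2*m'+1) m' + Nat.choose (2*m'+1) (m'+1) := by
      have := Nat.choose_succ_succ (2*m'+1) m'
      simp only [Nat.succ_eq_add_one] at this
      rwa [show 2*m'+1+1 = 2*m'+2 by omega] at this
    have e4 : Nat.choose (2*m'+1) m' = C := by
      rw [hC]
      have := Nat.choose_symm (show m'+1 ≤ 2*m'+1 by omega)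
      rwa [show 2*m'+1 - (m'+1) = m' by omega] at this
    rw [show m' + 2 = m' + 1 + 1 by omega, e1, e2, e3, e4, ← hC]
    omega
  have h2 : (m'+2) * Nat.choose (2*m'+1) (m'+2) = m' * C := by
    have := Nat.choose_succ_right_eq (2*m'+1) (m'+1)
    rw [show m'+1+1 = m'+2 by omega, show 2*m'+1 - (m'+1) = m' by omega] at this
    rw [Nat.mul_comm, this, Nat.mul_comm]
  apply Nat.eq_of_mul_eq_mul_left (show 0 < m' + 2 by omega)
  rw [Nat.mul_add, h1, h2]
  ring

theorem card_NSF_eq_catalan (n : ℕ) (hn : 1 ≤ n) : (NSF n).card = catalan (n-1) := by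
  rcases Nat.lt_or_ge n 2 with h1 | h2
  · have : n = 1 := by omega
    subst this
    rw [NSF_one]
    simp [catalan_zero]
  · obtain ⟨m', rfl⟩ : ∃ m', n = m' + 2 := ⟨n - 2, by omega⟩
    have hcl := Uc_closed (m'+2) (by omega) (m'+1) (by omega)
    rw [show m'+2 - (m'+1) = 1 by omega, show m'+2 + (m'+1) - 2 = 2*m'+1 by omega,
      show m'+2 - 1 = m'+1 by omega, Uc_total (by omega)] at hcl
    have hid := catalan_id m'
    rw [show m'+2-1 = m'+1 by omega]
    omega

section Transfer
variable {n : ℕ}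

def permList (π : Equiv.Perm (Fin n)) : List ℕ := List.ofFn (fun i => (π i : ℕ))

lemma permList_length (π : Equiv.Perm (Fin n)) : (permList π).length = n :=
  List.length_ofFn

lemma permList_getElem (π : Equiv.Perm (Fin n)) (i : ℕ) (h : i < (permList π).length) :
    (permList π)[i] = (π ⟨i, by simpa [permList_length] using h⟩ : ℕ) := by
  simp [permList, List.getElem_ofFn]

lemma permList_perm_range (π : Equiv.Perm (Fin n)) : permList π ~ List.range n := by
  apply List.perm_of_nodup_nodup_toFinset_eq
  · rw [permList, List.nodup_ofFn]
    intro i j hij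
    exact π.injective (Fin.val_injective hij)
  · exact List.nodup_range
  · ext x
    simp only [List.mem_toFinset, List.mem_range, permList, List.mem_ofFn, Set.mem_range]
    constructor
    · rintro ⟨i, rfl⟩
      exact (π i).isLt
    · intro hx
      exact ⟨π.symm ⟨x, hx⟩, by simp⟩

lemma avoids_iff_s13 (π : Equiv.Perm (Fin n)) : Avoids123 π ↔ Avo (permList π) := by
  constructor
  · intro hA a b c hsub hab hbc
    apply hA
    rw [List.sublist_iff_exists_fin_orderEmbedding_get_eq] at hsub
    obtain ⟨f, hf⟩ := hsub
    have h01 : (⟨0, by simp⟩ : Fin ([a,b,c].length)) < ⟨1, by simp⟩ := by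
      rw [Fin.lt_def]; simp
    have h12 : (⟨1, by simp⟩ : Fin ([a,b,c].length)) < ⟨2, by simp⟩ := by
      rw [Fin.lt_def]; simp
    have hlen : (permList π).length = n := permList_length π
    set i0 := f ⟨0, by simp⟩ with hi0
    set i1 := f ⟨1, by simp⟩ with hi1
    set i2 := f ⟨2, by simp⟩ with hi2
    have e0 : a = (permList π).get i0 := hf ⟨0, by simp⟩
    have e1 : b = (permList π).get i1 := hf ⟨1, by simp⟩
    have e2 : c = (permList π).get i2 := hf ⟨2, by simp⟩
    refine ⟨Fin.cast hlen i0, Fin.cast hlen i1, Fin.cast hlen i2, ?_, ?_, ?_, ?_⟩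
    · rw [Fin.lt_def]
      exact Fin.lt_def.mp (f.strictMono h01)
    · rw [Fin.lt_def]
      exact Fin.lt_def.mp (f.strictMono h12)
    · rw [Fin.lt_def]
      have ea : (π (Fin.cast hlen i0) : ℕ) = a := by
        rw [e0, List.get_eq_getElem, permList_getElem]; rfl
      have eb : (π (Fin.cast hlen i1) : ℕ) = b := by
        rw [e1, List.get_eq_getElem, permList_getElem]; rfl
      omega
    · rw [Fin.lt_def]
      have eb : (π (Fin.cast hlen i1) : ℕ) = b := by
        rw [e1, List.get_eq_getElem, permList_getElem]; rfl
      have ec : (π (Fin.cast hlen i2) : ℕ) = c := by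
        rw [e2, List.get_eq_getElem, permList_getElem]; rfl
      omega
  · rintro hA ⟨i, j, k, hij, hjk, h1, h2⟩
    have hlen : (permList π).length = n := permList_length π
    have hsub : [(permList π)[(i:ℕ)]'(by omega), (permList π)[(j:ℕ)]'(by omega),
        (permList π)[(k:ℕ)]'(by omega)] <+ permList π :=
      triple_sublist_of_get (by exact_mod_cast hij) (by exact_mod_cast hjk) (by omega)
    apply hA _ _ _ hsub
    · rw [permList_getElem, permList_getElem]
      exact Fin.lt_def.mp h1
    · rw [permList_getElem, permList_getElem]
      exact Fin.lt_def.mp h2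

lemma splits_iff (π : Equiv.Perm (Fin n)) : Splits π ↔ Spl (permList π) := by
  have hlen : (permList π).length = n := permList_length π
  constructor
  · rintro ⟨m, h0, hmn, hcond⟩
    refine ⟨m, h0, by omega, ?_⟩
    intro x hx y hy
    rw [List.mem_take_iff_getElem] at hx
    rw [List.mem_drop_iff_getElem] at hy
    obtain ⟨i, hi, rfl⟩ := hx
    obtain ⟨d, hd, rfl⟩ := hy
    rw [permList_getElem, permList_getElem]
    have := hcond ⟨i, by omega⟩ ⟨m + d, by omega⟩ (by exact (by omega : i < m))
      (by exact (by omega : m ≤ m + d))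
    exact Fin.lt_def.mp this
  · rintro ⟨s, h0, hslen, hcond⟩
    refine ⟨s, h0, by omega, ?_⟩
    intro i j hi hj
    have hx : (permList π)[(i:ℕ)]'(by omega) ∈ (permList π).take s := by
      rw [List.mem_take_iff_getElem]
      exact ⟨i, by omega, rfl⟩
    have hy : (permList π)[(j:ℕ)]'(by omega) ∈ (permList π).drop s := by
      rw [List.mem_drop_iff_getElem]
      refine ⟨(j : ℕ) - s, by omega, ?_⟩
      congr 1
      omega
    have := hcond _ hx _ hy
    rw [permList_getElem, permList_getElem] at this
    exact Fin.lt_def.mpr this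

theorem card_perm_eq (hn : 1 ≤ n) :
    Nat.card {π : Equiv.Perm (Fin n) // Avoids123 π ∧ ¬ Splits π} = (NSF n).card := by
  rw [← Nat.card_eq_finsetCard (NSF n)]
  apply Nat.card_congr
  refine Equiv.ofBijective (fun p => ⟨permList p.1, ?_⟩) ⟨?_, ?_⟩
  · rw [mem_NSF]
    exact ⟨permList_perm_range p.1, (avoids_iff_s13 p.1).mp p.2.1,
      fun h => p.2.2 ((splits_iff p.1).mpr h)⟩
  · rintro ⟨π, hπ⟩ ⟨π', hπ'⟩ h
    simp only [Subtype.mk.injEq] at h ⊢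
    apply Equiv.ext
    intro i
    have h1 : (permList π)[(i:ℕ)]'(by rw [permList_length]; exact i.isLt) = (π i : ℕ) := by
      rw [permList_getElem]
    have h2 : (permList π')[(i:ℕ)]'(by rw [permList_length]; exact i.isLt) = (π' i : ℕ) := by
      rw [permList_getElem]
    simp only [h] at h1
    apply Fin.val_injective
    rw [← h1, ← h2]
  · rintro ⟨w, hw⟩
    rw [mem_NSF] at hw
    obtain ⟨hp, ha, hs⟩ := hw
    have hlen : w.length = n := perm_range_length hp
    set F : Fin n → Fin n := fun i =>
      ⟨w[(i:ℕ)]'(by rw [hlen]; exact i.isLt),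
        perm_range_lt hp (List.getElem_mem _)⟩ with hF
    have hinj : Function.Injective F := by
      intro i j hFij
      have hv : w[(i:ℕ)]'(by rw [hlen]; exact i.isLt)
          = w[(j:ℕ)]'(by rw [hlen]; exact j.isLt) := by
        simpa [hF, Fin.ext_iff] using hFij
      have hnd := List.nodup_iff_injective_get.mp (perm_range_nodup hp)
      have heq := hnd (a₁ := ⟨(i:ℕ), by rw [hlen]; exact i.isLt⟩)
        (a₂ := ⟨(j:ℕ), by rw [hlen]; exact j.isLt⟩)
        (by simpa [List.get_eq_getElem] using hv)
      apply Fin.ext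
      simpa [Fin.ext_iff] using heq
    set π : Equiv.Perm (Fin n) := Equiv.ofBijective F (Finite.injective_iff_bijective.mp hinj)
      with hπdef
    have hofn : permList π = w := by
      apply List.ext_getElem (by rw [permList_length, hlen])
      intro idx h₁ h₂
      rw [permList_getElem]
      have : π ⟨idx, by simpa [permList_length] using h₁⟩
          = F ⟨idx, by simpa [permList_length] using h₁⟩ := rfl
      rw [this]
    refine ⟨⟨π, ?_, ?_⟩, Subtype.ext hofn⟩
    · rw [avoids_iff_s13, hofn]
      exact ha
    · rw [splits_iff, hofn]
      exact hs

end Transfer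

/-- The number of non-splitting 123-avoiding permutations in `S_n` is the
(n−1)-st Catalan number. -/
theorem stmt13 (n : ℕ) (hn : 1 ≤ n) :
    Nat.card {π : Equiv.Perm (Fin n) // Avoids123 π ∧ ¬ Splits π} = catalan (n - 1) := by
  rw [card_perm_eq hn, card_NSF_eq_catalan n hn]
end

section
/- For every natural number n ≥ 0, b_n({12, 12̄, 1̄2, 1̄2̄}) = 2^n, and for every n ≥ 2, b_n({12, 12̄, 1̄2, 2̄1̄}) = 1 + C(n+1, 2). -/
/-!
A signed permutation avoiding all four signings of `12` has no ascent at all, so it is the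
decreasing permutation with arbitrary bars.

Avoiding `12, 12̄, 1̄2, 2̄1̄` says exactly that a pair `i < j` is an ascent iff both entries are
barred. Then the bars determine the permutation, the barred positions form an interval (a barred
`i`, unbarred `k`, barred `j` with `i < k < j` would give `α j < α k < α i < α j`), and every
interval is realized by a block permutation. The empty interval together with the nonempty ones,
i.e. the unordered pairs of endpoints, give `1 + C(n+1, 2)`.
-/
theorem Equiv.Perm.eq_of_lt_iff_lt {α : Type*} [LinearOrder α] [Finite α] {π ρ : Equiv.Perm α}
    (h : ∀ i j, π i < π j ↔ ρ i < ρ j) : π = ρ := by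
  have hmono : StrictMono (π ∘ ρ.symm) := fun a b hab => (h _ _).2 (by simpa using hab)
  ext i
  simpa using hmono.apply_eq (x := ρ i)

theorem Equiv.Perm.apply_lt_apply_iff_not_lt {α : Type*} [LinearOrder α] (π : Equiv.Perm α)
    {i j : α} (hij : i ≠ j) : π i < π j ↔ ¬ π j < π i := by
  rw [not_lt, (π.injective.ne hij).le_iff_lt]

theorem Equiv.Perm.eq_of_lt_iff_lt_of_lt {α : Type*} [LinearOrder α] [Finite α]
    {π ρ : Equiv.Perm α} (h : ∀ i j, i < j → (π i < π j ↔ ρ i < ρ j)) : π = ρ := by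
  refine Equiv.Perm.eq_of_lt_iff_lt fun i j => ?_
  rcases lt_trichotomy i j with hij | rfl | hji
  · exact h i j hij
  · simp
  · rw [π.apply_lt_apply_iff_not_lt hji.ne', ρ.apply_lt_apply_iff_not_lt hji.ne', h j i hji]

theorem spContains_iff_exists_pair {n : ℕ} (α : SignedPerm n) (τ : SignedPerm 2) :
    SPContains α τ ↔ ∃ i j, i < j ∧ (τ.1 0 < τ.1 1 ↔ α.1 i < α.1 j) ∧
      α.2 i = τ.2 0 ∧ α.2 j = τ.2 1 := by
  constructor
  · rintro ⟨f, hf, hord, hsgn⟩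
    exact ⟨f 0, f 1, hf Fin.zero_lt_one, hord 0 1, hsgn 0, hsgn 1⟩
  · rintro ⟨i, j, hij, hlt, hi, hj⟩
    refine ⟨![i, j], fun p q hpq => ?_, fun p q => ?_, fun p => ?_⟩
    · fin_cases p <;> fin_cases q <;> simp_all
    · fin_cases p <;> fin_cases q
      · simp
      · exact hlt
      · show τ.1 1 < τ.1 0 ↔ α.1 j < α.1 i
        rw [τ.1.apply_lt_apply_iff_not_lt Fin.zero_lt_one.ne',
          α.1.apply_lt_apply_iff_not_lt hij.ne', hlt]
      · simp
    · fin_cases p <;> assumption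

theorem avoidsAll_iff_forall_not_lt {n : ℕ} (α : SignedPerm n) :
    AvoidsAll {p12, p12b, p1b2, p1b2b} α ↔ ∀ i j, i < j → ¬ α.1 i < α.1 j := by
  constructor
  · intro h i j hij hlt
    refine h (Equiv.refl _, ![α.2 i, α.2 j]) ?_
      ((spContains_iff_exists_pair _ _).2 ⟨i, j, hij, by simpa using hlt, rfl, rfl⟩)
    cases α.2 i <;> cases α.2 j <;> simp [p12, p12b, p1b2, p1b2b]
  · rintro h τ hτ hc
    obtain ⟨i, j, hij, hlt, -⟩ := (spContains_iff_exists_pair _ _).1 hc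
    rcases hτ with rfl | rfl | rfl | rfl <;> exact h i j hij (hlt.1 (by decide))

theorem avoidsAll_iff_fst_eq_revPerm {n : ℕ} (α : SignedPerm n) :
    AvoidsAll {p12, p12b, p1b2, p1b2b} α ↔ α.1 = Fin.revPerm := by
  rw [avoidsAll_iff_forall_not_lt]
  constructor
  · intro h
    exact Equiv.Perm.eq_of_lt_iff_lt_of_lt fun i j hij => by simp [h i j hij, hij.le]
  · rintro h i j hij
    simpa [h] using hij.le

theorem bn_p12_p12b_p1b2_p1b2b (n : ℕ) : bn n {p12, p12b, p1b2, p1b2b} = 2 ^ n := by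
  rw [bn, Nat.card_congr ((Equiv.subtypeEquivRight avoidsAll_iff_fst_eq_revPerm).trans
    (Equiv.prodSubtypeFstEquivSubtypeProd (p := (· = Fin.revPerm)))), Nat.card_prod]
  simp

def AscentsBarred {n : ℕ} (α : SignedPerm n) : Prop :=
  ∀ i j, i < j → (α.1 i < α.1 j ↔ α.2 i = true ∧ α.2 j = true)

theorem avoidsAll_iff_ascentsBarred {n : ℕ} (α : SignedPerm n) :
    AvoidsAll {p12, p12b, p1b2, p2b1b} α ↔ AscentsBarred α := by
  constructor
  · intro h i j hij
    constructor
    · intro hlt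
      by_contra hbar
      refine h (Equiv.refl _, ![α.2 i, α.2 j]) ?_
        ((spContains_iff_exists_pair _ _).2 ⟨i, j, hij, by simpa using hlt, rfl, rfl⟩)
      cases hi : α.2 i <;> cases hj : α.2 j <;> simp_all [p12, p12b, p1b2, p2b1b]
    · rintro ⟨hi, hj⟩
      by_contra hlt
      refine h p2b1b (by simp) ((spContains_iff_exists_pair _ _).2 ⟨i, j, hij, ?_, hi, hj⟩)
      simpa [p2b1b] using hlt
  · rintro h τ hτ hc
    obtain ⟨i, j, hij, hlt, hi, hj⟩ := (spContains_iff_exists_pair _ _).1 hc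
    rcases hτ with rfl | rfl | rfl | rfl
    case inr.inr.inr =>
      have hasc := (h i j hij).2 ⟨by simpa [p2b1b] using hi, by simpa [p2b1b] using hj⟩
      exact absurd hasc (by simpa [p2b1b] using hlt)
    all_goals
      have hbar := (h i j hij).1 (hlt.1 (by decide))
      simp_all [p12, p12b, p1b2]

/-- Positions before `s` get the largest values in decreasing order, the block `[s, t]` the
middle values in increasing order, and positions after `t` the smallest values. -/
def blockFun {n : ℕ} (s t i : Fin n) : Fin n :=
  if h : s ≤ i ∧ i ≤ t then ⟨n - 1 - t + (i - s), by omega⟩ else i.rev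

theorem blockFun_lt_blockFun_iff {n : ℕ} {s t i j : Fin n} (hij : i < j) :
    blockFun s t i < blockFun s t j ↔ (s ≤ i ∧ i ≤ t) ∧ (s ≤ j ∧ j ≤ t) := by
  unfold blockFun
  split_ifs <;> simp only [Fin.lt_def, Fin.le_def, Fin.val_rev] at * <;> omega

theorem blockFun_injective {n : ℕ} (s t : Fin n) : Function.Injective (blockFun s t) := by
  intro i j h
  unfold blockFun at h
  split_ifs at h <;> simp only [Fin.ext_iff, Fin.le_def, Fin.val_rev] at * <;> omega

noncomputable def blockPerm {n : ℕ} (s t : Fin n) : Equiv.Perm (Fin n) :=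
  Equiv.ofBijective (blockFun s t) (Finite.injective_iff_bijective.1 (blockFun_injective s t))

noncomputable def intervalSignedPerm {n : ℕ} :
    Option {p : Fin n × Fin n // p.1 ≤ p.2} → SignedPerm n
  | none => (Fin.revPerm, fun _ => false)
  | some p => (blockPerm p.1.1 p.1.2, fun i => decide (p.1.1 ≤ i ∧ i ≤ p.1.2))

theorem ascentsBarred_intervalSignedPerm {n : ℕ}
    (o : Option {p : Fin n × Fin n // p.1 ≤ p.2}) :
    AscentsBarred (intervalSignedPerm o) := by
  intro i j hij
  cases o with
  | none => simpa [intervalSignedPerm] using hij.le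
  | some p => simpa [intervalSignedPerm, blockPerm] using blockFun_lt_blockFun_iff hij

theorem intervalSignedPerm_injective {n : ℕ} :
    Function.Injective (intervalSignedPerm (n := n)) := by
  rintro (_ | ⟨⟨s, t⟩, hst⟩) (_ | ⟨⟨s', t'⟩, hst'⟩) h
  · rfl
  · simpa [intervalSignedPerm, hst'] using congrFun (congrArg Prod.snd h) s'
  · simpa [intervalSignedPerm, hst] using congrFun (congrArg Prod.snd h) s
  · have hIcc : Set.Icc s t = Set.Icc s' t' := by
      ext i
      exact decide_eq_decide.1 (congrFun (congrArg Prod.snd h) i)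
    obtain ⟨rfl, rfl⟩ := (Set.Icc_eq_Icc_iff hst).1 hIcc
    rfl

namespace AscentsBarred

variable {n : ℕ} {α β : SignedPerm n}

theorem eq_of_snd_eq (hα : AscentsBarred α) (hβ : AscentsBarred β) (h : α.2 = β.2) :
    α = β :=
  Prod.ext (Equiv.Perm.eq_of_lt_iff_lt_of_lt fun i j hij => by rw [hα i j hij, hβ i j hij, h]) h

theorem barred_of_le_of_le (hα : AscentsBarred α) {i j k : Fin n} (hi : α.2 i = true)
    (hj : α.2 j = true) (hik : i ≤ k) (hkj : k ≤ j) : α.2 k = true := by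
  by_contra hk
  have hik' : i < k := lt_of_le_of_ne hik (by rintro rfl; exact hk hi)
  have hkj' : k < j := lt_of_le_of_ne hkj (by rintro rfl; exact hk hj)
  have hij : α.1 i < α.1 j := (hα i j (hik'.trans hkj')).2 ⟨hi, hj⟩
  have hki : α.1 k < α.1 i := by
    rw [α.1.apply_lt_apply_iff_not_lt hik'.ne', hα i k hik']
    exact fun h => hk h.2
  have hjk : α.1 j < α.1 k := by
    rw [α.1.apply_lt_apply_iff_not_lt hkj'.ne', hα k j hkj']
    exact fun h => hk h.1
  exact lt_asymm hij (hjk.trans hki)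

theorem exists_intervalSignedPerm_snd_eq (hα : AscentsBarred α) :
    ∃ o, (intervalSignedPerm o).2 = α.2 := by
  by_cases hbar : ∃ i, α.2 i = true
  · obtain ⟨i, hi⟩ := hbar
    set B := Finset.univ.filter (fun i => α.2 i = true)
    have hB : B.Nonempty := ⟨i, by simpa [B] using hi⟩
    have hmin : α.2 (B.min' hB) = true := by simpa [B] using B.min'_mem hB
    have hmax : α.2 (B.max' hB) = true := by simpa [B] using B.max'_mem hB
    refine ⟨some ⟨(B.min' hB, B.max' hB), B.min'_le_max' hB⟩, funext fun k => ?_⟩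
    by_cases hk : α.2 k = true
    · have hkB : k ∈ B := by simpa [B] using hk
      simp [intervalSignedPerm, hk, B.min'_le k hkB, B.le_max' k hkB]
    · simpa [intervalSignedPerm, hk] using fun h1 h2 => hk (hα.barred_of_le_of_le hmin hmax h1 h2)
  · push Not at hbar
    exact ⟨none, funext fun i => by simpa [intervalSignedPerm] using hbar i⟩

theorem exists_intervalSignedPerm_eq (hα : AscentsBarred α) : ∃ o, intervalSignedPerm o = α :=
  let ⟨o, ho⟩ := hα.exists_intervalSignedPerm_snd_eq
  ⟨o, (ascentsBarred_intervalSignedPerm o).eq_of_snd_eq hα ho⟩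

end AscentsBarred

theorem bn_p12_p12b_p1b2_p2b1b (n : ℕ) :
    bn n {p12, p12b, p1b2, p2b1b} = 1 + Nat.choose (n + 1) 2 := by
  have hbij : Function.Bijective fun o : Option {p : Fin n × Fin n // p.1 ≤ p.2} =>
      (⟨intervalSignedPerm o, ascentsBarred_intervalSignedPerm o⟩ : {α // AscentsBarred α}) :=
    ⟨fun o o' h => intervalSignedPerm_injective (congrArg Subtype.val h),
      fun α => α.2.exists_intervalSignedPerm_eq.imp fun _ => Subtype.ext⟩
  rw [bn, Nat.card_congr (Equiv.subtypeEquivRight avoidsAll_iff_ascentsBarred),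
    ← Nat.card_congr (Equiv.ofBijective _ hbij), Finite.card_option,
    ← Nat.card_congr Sym2.sortEquiv, Sym2.natCard, Nat.card_fin, add_comm]

/-- b_n({12,12̄,1̄2,1̄2̄}) = 2^n for n ≥ 0, and b_n({12,12̄,1̄2,2̄1̄}) = 1 + C(n+1,2) for n ≥ 2. -/
theorem stmt14 (n : ℕ) :
    bn n {p12, p12b, p1b2, p1b2b} = 2 ^ n ∧
    (2 ≤ n → bn n {p12, p12b, p1b2, p2b1b} = 1 + Nat.choose (n + 1) 2) :=
  ⟨bn_p12_p12b_p1b2_p1b2b n, fun _ => bn_p12_p12b_p1b2_p2b1b n⟩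
end

section
/- For every natural number n ≥ 1, b_n({12, 12̄, 21̄, 1̄2̄}) = b_n({12, 12̄, 21̄, 2̄1̄}) = 2^n, and b_n({12, 12̄, 21̄, 21}) = 2·n!. -/
lemma spContains_iff {n : ℕ} (α : SignedPerm n) (τ : SignedPerm 2) :
    SPContains α τ ↔ ∃ i j : Fin n, i < j ∧
      (τ.1 0 < τ.1 1 ↔ α.1 i < α.1 j) ∧ α.2 i = τ.2 0 ∧ α.2 j = τ.2 1 := by
  constructor
  · rintro ⟨f, hf, hord, hsg⟩
    exact ⟨f 0, f 1, hf (by decide), hord 0 1, hsg 0, hsg 1⟩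
  · rintro ⟨i, j, hij, hord, h0, h1⟩
    have hne1 : τ.1 0 ≠ τ.1 1 := τ.1.injective.ne (by decide)
    have hne2 : α.1 i ≠ α.1 j := α.1.injective.ne hij.ne
    refine ⟨![i, j], ?_, ?_, ?_⟩
    · intro a b hab
      fin_cases a <;> fin_cases b <;>
        first
          | exact absurd hab (by decide)
          | simpa using hij
    · intro p q
      fin_cases p <;> fin_cases q
      · simp
      · simpa using hord
      · have e1 : τ.1 1 < τ.1 0 ↔ ¬ τ.1 0 < τ.1 1 :=
          ⟨fun h h' => lt_irrefl _ (h.trans h'),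
           fun h => (hne1.lt_or_gt).resolve_left h⟩
        have e2 : α.1 j < α.1 i ↔ ¬ α.1 i < α.1 j :=
          ⟨fun h h' => lt_irrefl _ (h.trans h'),
           fun h => (hne2.lt_or_gt).resolve_left h⟩
        simpa [e1, e2] using not_congr hord
      · simp
    · intro j'
      fin_cases j'
      · simpa using h0
      · simpa using h1

lemma eq_sort_of_strictMono {n : ℕ} {K : Type*} [LinearOrder K] (k : Fin n → K)
    (σ : Equiv.Perm (Fin n)) (h : StrictMono (k ∘ σ)) : σ = Tuple.sort k := by
  rw [Tuple.eq_sort_iff]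
  exact ⟨h.monotone, fun i j hij hk => absurd hk (h hij).ne⟩

lemma strictMono_sort' {n : ℕ} {K : Type*} [LinearOrder K] (k : Fin n → K)
    (hk : Function.Injective k) : StrictMono (k ∘ Tuple.sort k) :=
  (Tuple.monotone_sort k).strictMono_of_injective (hk.comp (Equiv.injective _))

lemma card_two_pow {n : ℕ} (P : SignedPerm n → Prop)
    (key : (Fin n → Bool) → Fin n → Bool ×ₗ ℤ)
    (hkey : ∀ s, Function.Injective (key s))
    (hiff : ∀ α, P α ↔ StrictMono (key (α.2 ∘ α.1.symm) ∘ α.1)) :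
    Nat.card {α : SignedPerm n // P α} = 2 ^ n := by
  have e : {α : SignedPerm n // P α} ≃ (Fin n → Bool) :=
    { toFun := fun a => a.1.2 ∘ a.1.1.symm
      invFun := fun s => ⟨(Tuple.sort (key s), fun i => s (Tuple.sort (key s) i)), by
        rw [hiff]
        have hs : ((fun i => s ((Tuple.sort (key s)) i)) ∘ (Tuple.sort (key s)).symm) = s := by
          funext v; simp
        simpa [hs] using strictMono_sort' (key s) (hkey s)⟩
      left_inv := by
        rintro ⟨⟨σ, b⟩, hP⟩
        have hσ : σ = Tuple.sort (key (b ∘ σ.symm)) :=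
          eq_sort_of_strictMono _ _ ((hiff (σ, b)).1 hP)
        apply Subtype.ext
        refine Prod.ext ?_ ?_
        · exact hσ.symm
        · funext i
          simp only [← hσ]
          simp
      right_inv := by
        intro s
        funext v
        simp }
  rw [Nat.card_congr e]
  simp [Nat.card_eq_fintype_card]

lemma avoids1_iff {n : ℕ} (α : SignedPerm n) :
    AvoidsAll ({p12, p12b, p21b, p1b2b} : Set (SignedPerm 2)) α ↔
    ∀ i j : Fin n, i < j →
      ((α.2 i = true ∧ α.2 j = false) ∨ (α.2 i = α.2 j ∧ α.1 j < α.1 i)) := by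
  simp only [AvoidsAll, Set.mem_insert_iff, Set.mem_singleton_iff, forall_eq_or_imp,
    forall_eq, spContains_iff, p12, p12b, p21b, p1b2b, Equiv.refl_apply,
    Equiv.swap_apply_left, Equiv.swap_apply_right, Matrix.cons_val_zero, Matrix.cons_val_one,
    Matrix.head_cons, (by decide : (0:Fin 2) < 1), (by decide : ¬(1:Fin 2) < 0),
    true_iff, false_iff, iff_true, iff_false]
  push_neg
  constructor
  · rintro ⟨h1, h2, h3, h4⟩ i j hij
    have hne : α.1 i ≠ α.1 j := α.1.injective.ne hij.ne
    rcases hne.lt_or_gt with hlt | hlt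
    · cases hbi : α.2 i
      · cases hbj : α.2 j
        · exact absurd hbj (h1 i j hij hlt hbi)
        · exact absurd hbj (h2 i j hij hlt hbi)
      · cases hbj : α.2 j
        · exact Or.inl ⟨rfl, rfl⟩
        · exact absurd hbj (h4 i j hij hlt hbi)
    · cases hbi : α.2 i
      · cases hbj : α.2 j
        · exact Or.inr ⟨rfl, hlt⟩
        · exact absurd hbj (h3 i j hij hlt.le hbi)
      · cases hbj : α.2 j
        · exact Or.inl ⟨rfl, rfl⟩
        · exact Or.inr ⟨rfl, hlt⟩
  · refine fun h => ⟨fun i j hij o si sj => ?_, fun i j hij o si sj => ?_,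
      fun i j hij o si sj => ?_, fun i j hij o si sj => ?_⟩ <;>
      rcases h i j hij with ⟨h1, h2⟩ | ⟨h1, h2⟩ <;> simp_all <;>
      exact absurd h2 (not_lt.2 o.le)

lemma avoids2_iff {n : ℕ} (α : SignedPerm n) :
    AvoidsAll ({p12, p12b, p21b, p2b1b} : Set (SignedPerm 2)) α ↔
    ∀ i j : Fin n, i < j →
      ((α.2 i = true ∧ α.2 j = false) ∨ (α.2 i = true ∧ α.2 j = true ∧ α.1 i < α.1 j) ∨
        (α.2 i = false ∧ α.2 j = false ∧ α.1 j < α.1 i)) := by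
  simp only [AvoidsAll, Set.mem_insert_iff, Set.mem_singleton_iff, forall_eq_or_imp,
    forall_eq, spContains_iff, p12, p12b, p21b, p2b1b, Equiv.refl_apply,
    Equiv.swap_apply_left, Equiv.swap_apply_right, Matrix.cons_val_zero, Matrix.cons_val_one,
    Matrix.head_cons, (by decide : (0:Fin 2) < 1), (by decide : ¬(1:Fin 2) < 0),
    true_iff, false_iff, iff_true, iff_false]
  push_neg
  constructor
  · rintro ⟨h1, h2, h3, h4⟩ i j hij
    have hne : α.1 i ≠ α.1 j := α.1.injective.ne hij.ne
    rcases hne.lt_or_gt with hlt | hlt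
    · cases hbi : α.2 i
      · cases hbj : α.2 j
        · exact absurd hbj (h1 i j hij hlt hbi)
        · exact absurd hbj (h2 i j hij hlt hbi)
      · cases hbj : α.2 j
        · exact Or.inl ⟨rfl, rfl⟩
        · exact Or.inr (Or.inl ⟨rfl, rfl, hlt⟩)
    · cases hbi : α.2 i
      · cases hbj : α.2 j
        · exact Or.inr (Or.inr ⟨rfl, rfl, hlt⟩)
        · exact absurd hbj (h3 i j hij hlt.le hbi)
      · cases hbj : α.2 j
        · exact Or.inl ⟨rfl, rfl⟩
        · exact absurd hbj (h4 i j hij hlt.le hbi)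
  · refine fun h => ⟨fun i j hij o si sj => ?_, fun i j hij o si sj => ?_,
      fun i j hij o si sj => ?_, fun i j hij o si sj => ?_⟩ <;>
      rcases h i j hij with ⟨h1, h2⟩ | ⟨h1, h2, h3⟩ | ⟨h1, h2, h3⟩ <;> simp_all <;>
      first
        | exact absurd h3 (not_lt.2 o.le)
        | exact absurd o (not_lt.2 h3.le)
        | exact absurd o (not_le.2 h3)

lemma avoids3_iff {n : ℕ} (α : SignedPerm n) :
    AvoidsAll ({p12, p12b, p21b, p21} : Set (SignedPerm 2)) α ↔
    ∀ i : Fin n, (i : ℕ) + 1 < n → α.2 i = true := by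
  simp only [AvoidsAll, Set.mem_insert_iff, Set.mem_singleton_iff, forall_eq_or_imp,
    forall_eq, spContains_iff, p12, p12b, p21b, p21, Equiv.refl_apply,
    Equiv.swap_apply_left, Equiv.swap_apply_right, Matrix.cons_val_zero, Matrix.cons_val_one,
    Matrix.head_cons, (by decide : (0:Fin 2) < 1), (by decide : ¬(1:Fin 2) < 0),
    true_iff, false_iff, iff_true, iff_false]
  push_neg
  constructor
  · rintro ⟨h1, h2, h3, h4⟩ i hi
    cases hbi : α.2 i
    · exfalso
      set j : Fin n := ⟨(i : ℕ) + 1, hi⟩ with hj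
      have hij : i < j := by
        rw [Fin.lt_def]; simp [hj]
      have hne : α.1 i ≠ α.1 j := α.1.injective.ne hij.ne
      rcases hne.lt_or_gt with hlt | hlt
      · cases hbj : α.2 j
        · exact h1 i j hij hlt hbi hbj
        · exact h2 i j hij hlt hbi hbj
      · cases hbj : α.2 j
        · exact h4 i j hij hlt.le hbi hbj
        · exact h3 i j hij hlt.le hbi hbj
    · rfl
  · intro h
    have key : ∀ i j : Fin n, i < j → α.2 i = false → False := by
      intro i j hij hbi
      have hlt : (i : ℕ) + 1 < n := lt_of_le_of_lt (Nat.succ_le_of_lt hij) j.isLt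
      rw [h i hlt] at hbi
      simp at hbi
    exact ⟨fun i j hij _ hbi => absurd (key i j hij hbi) not_false,
      fun i j hij _ hbi => absurd (key i j hij hbi) not_false,
      fun i j hij _ hbi => absurd (key i j hij hbi) not_false,
      fun i j hij _ hbi => absurd (key i j hij hbi) not_false⟩

noncomputable def key1 {n : ℕ} (s : Fin n → Bool) : Fin n → Bool ×ₗ ℤ :=
  fun v => toLex (!s v, -((v : ℕ) : ℤ))

noncomputable def key2 {n : ℕ} (s : Fin n → Bool) : Fin n → Bool ×ₗ ℤ :=
  fun v => toLex (!s v, if s v then ((v : ℕ) : ℤ) else -((v : ℕ) : ℤ))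

lemma key1_inj {n : ℕ} (s : Fin n → Bool) : Function.Injective (key1 s) := by
  intro v w h
  simp only [key1, EmbeddingLike.apply_eq_iff_eq, Prod.mk.injEq] at h
  exact Fin.val_injective (by exact_mod_cast neg_injective h.2)

lemma key2_inj {n : ℕ} (s : Fin n → Bool) : Function.Injective (key2 s) := by
  intro v w h
  simp only [key2, EmbeddingLike.apply_eq_iff_eq, Prod.mk.injEq] at h
  obtain ⟨h1, h2⟩ := h
  have hs : s v = s w := by cases hv : s v <;> cases hw : s w <;> simp_all
  rw [hs] at h2
  cases hw : s w <;> rw [hw] at h2 <;> simp at h2 <;>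
    exact Fin.val_injective (by exact_mod_cast h2)

lemma hiff1 {n : ℕ} (α : SignedPerm n) :
    AvoidsAll ({p12, p12b, p21b, p1b2b} : Set (SignedPerm 2)) α ↔
      StrictMono (key1 (α.2 ∘ α.1.symm) ∘ α.1) := by
  rw [avoids1_iff]
  have key : ∀ i j : Fin n,
      ((key1 (α.2 ∘ ⇑α.1.symm) ∘ ⇑α.1) i < (key1 (α.2 ∘ ⇑α.1.symm) ∘ ⇑α.1) j) ↔
      ((α.2 i = true ∧ α.2 j = false) ∨ (α.2 i = α.2 j ∧ α.1 j < α.1 i)) := by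
    intro i j
    simp only [key1, Function.comp_apply, Equiv.symm_apply_apply, Prod.Lex.lt_iff,
      Bool.lt_iff, neg_lt_neg_iff, Fin.lt_def]
    cases hbi : α.2 i <;> cases hbj : α.2 j <;> simp
  exact ⟨fun h i j hij => (key i j).mpr (h i j hij), fun h i j hij => (key i j).mp (h hij)⟩

lemma hiff2 {n : ℕ} (α : SignedPerm n) :
    AvoidsAll ({p12, p12b, p21b, p2b1b} : Set (SignedPerm 2)) α ↔
      StrictMono (key2 (α.2 ∘ α.1.symm) ∘ α.1) := by
  rw [avoids2_iff]
  have key : ∀ i j : Fin n,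
      ((key2 (α.2 ∘ ⇑α.1.symm) ∘ ⇑α.1) i < (key2 (α.2 ∘ ⇑α.1.symm) ∘ ⇑α.1) j) ↔
      ((α.2 i = true ∧ α.2 j = false) ∨ (α.2 i = true ∧ α.2 j = true ∧ α.1 i < α.1 j) ∨
        (α.2 i = false ∧ α.2 j = false ∧ α.1 j < α.1 i)) := by
    intro i j
    simp only [key2, Function.comp_apply, Equiv.symm_apply_apply, Prod.Lex.lt_iff,
      Bool.lt_iff, Fin.lt_def]
    cases hbi : α.2 i <;> cases hbj : α.2 j <;> simp
  exact ⟨fun h i j hij => (key i j).mpr (h i j hij), fun h i j hij => (key i j).mp (h hij)⟩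

/-- For n ≥ 1: b_n({12,12̄,21̄,1̄2̄}) = b_n({12,12̄,21̄,2̄1̄}) = 2^n and
b_n({12,12̄,21̄,21}) = 2·n!. -/
theorem stmt15 (n : ℕ) (hn : 1 ≤ n) :
    bn n {p12, p12b, p21b, p1b2b} = 2 ^ n ∧
    bn n {p12, p12b, p21b, p2b1b} = 2 ^ n ∧
    bn n {p12, p12b, p21b, p21} = 2 * Nat.factorial n := by
  refine ⟨?_, ?_, ?_⟩
  · exact card_two_pow _ key1 key1_inj hiff1
  · exact card_two_pow _ key2 key2_inj hiff2
  · have e : {α : SignedPerm n // AvoidsAll ({p12, p12b, p21b, p21} : Set (SignedPerm 2)) α} ≃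
        Equiv.Perm (Fin n) × Bool :=
      { toFun := fun a => (a.1.1, a.1.2 ⟨n - 1, by omega⟩)
        invFun := fun x => ⟨(x.1, fun i => if (i : ℕ) = n - 1 then x.2 else true), by
          rw [avoids3_iff]
          intro i hi
          simp only [if_neg (by omega : ¬ (i : ℕ) = n - 1)]⟩
        left_inv := by
          rintro ⟨⟨σ, b⟩, hP⟩
          rw [avoids3_iff] at hP
          apply Subtype.ext
          refine Prod.ext rfl ?_
          funext i
          by_cases hi : (i : ℕ) = n - 1
          · have : i = ⟨n - 1, by omega⟩ := Fin.ext hi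
            simp [hi, this]
          · have := hP i (by omega)
            simp only [if_neg hi]
            exact this.symm
        right_inv := by
          rintro ⟨σ, b⟩
          simp }
    rw [bn, Nat.card_congr e]
    simp [Nat.card_eq_fintype_card, Fintype.card_perm, Nat.mul_comm]
end
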